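/- arXiv:1407.8240 — 3 statements merged into one kernel-verified Lean document; each statement's English description precedes it below -/
import Mathlib

section
/- If (R, ·_λ·) is an r-dimensional left (respectively, right) Novikov conformal superalgebra, then R with the λ-bracket [a_λ b] = a_λ b − (−1)^{αβ}(b_{−λ−T} a), for homogeneous a ∈ R_α and b ∈ R_β, is an r-dimensional Lie conformal superalgebra. -/
open Finsupp MvPolynomial
open scoped TensorProduct

namespace CA

noncomputable section

variable (r : ℕ) (R : Type*) [AddCommGroup R] [Module ℂ R]
  [Module (MvPolynomial (Fin r) ℂ) R] [IsScalarTower ℂ (MvPolynomial (Fin r) ℂ) R]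

/-- Polynomials in `r` variables (the `λ`'s) with coefficients in `R`,
encoded via exponent multi-indices. -/
abbrev VP : Type _ := (Fin r →₀ ℕ) →₀ R

/-- Polynomials in two families of `r` variables (`λ`'s = `Sum.inl`, `μ`'s = `Sum.inr`)
with coefficients in `R`. -/
abbrev BP : Type _ := ((Fin r ⊕ Fin r) →₀ ℕ) →₀ R

/-- The action of `T i` on `R`, as a `ℂ`-linear endomorphism. -/
def tAct (i : Fin r) : R →ₗ[ℂ] R where
  toFun v := (X i : MvPolynomial (Fin r) ℂ) • v
  map_add' u v := smul_add _ u v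
  map_smul' c v := by
    simp only [RingHom.id_apply]
    rw [← algebraMap_smul (MvPolynomial (Fin r) ℂ) c v, ← mul_smul, mul_comm, mul_smul,
      algebraMap_smul]

/-- Multiplication by the variable `λ i` on `VP`. -/
def vLam (i : Fin r) : Module.End ℂ (VP r R) :=
  Finsupp.lmapDomain R ℂ (· + Finsupp.single i 1)

/-- The action of `T i` on the coefficients of an element of `VP`. -/
def vT (i : Fin r) : Module.End ℂ (VP r R) :=
  Finsupp.mapRange.linearMap (tAct r R i)

/-- The substitution `λ ↦ -λ - T` on `VP`. -/
def vNeg (F : VP r R) : VP r R :=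
  F.sum fun k v =>
    ((List.ofFn fun i : Fin r => (-(vLam r R i) - vT r R i) ^ (k i)).prod)
      (Finsupp.single 0 v)

/-- Multiplication by the monomial with exponent `e` on `BP`. -/
def bShift (e : (Fin r ⊕ Fin r) →₀ ℕ) : Module.End ℂ (BP r R) :=
  Finsupp.lmapDomain R ℂ (· + e)

/-- Multiplication by `λ i` on `BP`. -/
def bLam (i : Fin r) : Module.End ℂ (BP r R) := bShift r R (Finsupp.single (Sum.inl i) 1)

/-- Multiplication by `μ i` on `BP`. -/
def bMu (i : Fin r) : Module.End ℂ (BP r R) := bShift r R (Finsupp.single (Sum.inr i) 1)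

/-- The action of `T i` on the coefficients of an element of `BP`. -/
def bT (i : Fin r) : Module.End ℂ (BP r R) :=
  Finsupp.mapRange.linearMap (tAct r R i)

/-- Evaluation of an element of `VP` at a (commuting) family `s` of operators on `BP`:
`Σ_k λ^k v_k ↦ Σ_k s^k (v_k)`. -/
def ev (s : Fin r → Module.End ℂ (BP r R)) (F : VP r R) : BP r R :=
  F.sum fun k v => ((List.ofFn fun i : Fin r => (s i) ^ (k i)).prod) (Finsupp.single 0 v)

/-- Extension of a `λ`-product `p` to a polynomial first argument, evaluated at the
family of operators `s`:  `(Σ_e x^e v_e)_s b = Σ_e x^e · (p v_e b)(s)`. -/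
def evL (p : R → R → VP r R) (s : Fin r → Module.End ℂ (BP r R)) (F : BP r R) (b : R) :
    BP r R :=
  F.sum fun e v => bShift r R e (ev r R s (p v b))

/-- Extension of a `λ`-product `p` to a polynomial second argument, evaluated at the
family of operators `s`:  `a_s (Σ_e x^e w_e) = Σ_e x^e · (p a w_e)(s)`. -/
def evR (p : R → R → VP r R) (s : Fin r → Module.End ℂ (BP r R)) (a : R) (G : BP r R) :
    BP r R :=
  G.sum fun e w => bShift r R e (ev r R s (p a w))

/-- The family `λ`. -/
def FL : Fin r → Module.End ℂ (BP r R) := fun i => bLam r R i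
/-- The family `μ`. -/
def FM : Fin r → Module.End ℂ (BP r R) := fun i => bMu r R i
/-- The family `λ + μ`. -/
def FLM : Fin r → Module.End ℂ (BP r R) := fun i => bLam r R i + bMu r R i
/-- The family `-λ - T`. -/
def FNL : Fin r → Module.End ℂ (BP r R) := fun i => -(bLam r R i) - bT r R i
/-- The family `-μ - T`. -/
def FNM : Fin r → Module.End ℂ (BP r R) := fun i => -(bMu r R i) - bT r R i
/-- The family `-λ - μ - T`. -/
def FNLM : Fin r → Module.End ℂ (BP r R) := fun i => -(bLam r R i) - bMu r R i - bT r R i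

/-- The sign `(-1)^(αβ)` for parities `α β : ZMod 2`. -/
def sgn (α β : ZMod 2) : ℤ := (-1) ^ (α.val * β.val)

/-- `ℂ`-bilinearity of a `λ`-product. -/
def Bilin (p : R → R → VP r R) : Prop :=
  (∀ a b c : R, p (a + b) c = p a c + p b c) ∧
  (∀ a b c : R, p a (b + c) = p a b + p a c) ∧
  (∀ (z : ℂ) (a b : R), p (z • a) b = z • p a b) ∧
  (∀ (z : ℂ) (a b : R), p a (z • b) = z • p a b)

/-- A `λ`-product is parity-preserving w.r.t. a grading `G`. -/
def ParityPres (G : ZMod 2 → Submodule ℂ R) (p : R → R → VP r R) : Prop :=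
  ∀ (α β : ZMod 2) (a b : R), a ∈ G α → b ∈ G β → ∀ k, p a b k ∈ G (α + β)

/-- Conformal sesquilinearity: `(T_i a)_λ b = -λ_i (a_λ b)` and
`a_λ (T_i b) = (T_i + λ_i)(a_λ b)`. -/
def Sesq (p : R → R → VP r R) : Prop :=
  ∀ (i : Fin r) (a b : R),
    p ((X i : MvPolynomial (Fin r) ℂ) • a) b = (-(vLam r R i)) (p a b) ∧
    p a ((X i : MvPolynomial (Fin r) ℂ) • b) = (vT r R i + vLam r R i) (p a b)

/-- `G` is a `ℤ/2ℤ`-grading of the `ℂ[T]`-module `R`. -/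
def IsGraded (G : ZMod 2 → Submodule ℂ R) : Prop :=
  DirectSum.IsInternal G ∧
  ∀ (i : Fin r) (α : ZMod 2) (v : R), v ∈ G α →
    (X i : MvPolynomial (Fin r) ℂ) • v ∈ G α

/-- Conformal skew-symmetry `[a_λ b] = -(-1)^{αβ} [b_{-λ-T} a]`. -/
def Skew (G : ZMod 2 → Submodule ℂ R) (q : R → R → VP r R) : Prop :=
  ∀ (α β : ZMod 2) (a b : R), a ∈ G α → b ∈ G β →
    q a b = -(sgn α β • vNeg r R (q b a))

/-- Conformal Jacobi identity
`[a_λ [b_μ c]] = [[a_λ b]_{λ+μ} c] + (-1)^{αβ} [b_μ [a_λ c]]`. -/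
def Jacobi (G : ZMod 2 → Submodule ℂ R) (q : R → R → VP r R) : Prop :=
  ∀ (α β : ZMod 2) (a b c : R), a ∈ G α → b ∈ G β →
    evR r R q (FL r R) a (ev r R (FM r R) (q b c)) =
      evL r R q (FLM r R) (ev r R (FL r R) (q a b)) c +
      sgn α β • evR r R q (FM r R) b (ev r R (FL r R) (q a c))

/-- `q` is an `r`-dimensional Lie conformal superalgebra `λ`-bracket on `R` graded by `G`. -/
def IsLieConfSuper (G : ZMod 2 → Submodule ℂ R) (q : R → R → VP r R) : Prop :=
  Bilin r R q ∧ ParityPres r R G q ∧ Sesq r R q ∧ Skew r R G q ∧ Jacobi r R G q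

/-- Left Novikov conformal identity
`(a_λ b)_{λ+μ} c - a_λ (b_μ c) = (-1)^{αβ} ((b_μ a)_{λ+μ} c - b_μ (a_λ c))`. -/
def NovLeft1 (G : ZMod 2 → Submodule ℂ R) (p : R → R → VP r R) : Prop :=
  ∀ (α β : ZMod 2) (a b c : R), a ∈ G α → b ∈ G β →
    evL r R p (FLM r R) (ev r R (FL r R) (p a b)) c -
      evR r R p (FL r R) a (ev r R (FM r R) (p b c)) =
    sgn α β • (evL r R p (FLM r R) (ev r R (FM r R) (p b a)) c -
      evR r R p (FM r R) b (ev r R (FL r R) (p a c)))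

/-- Left Novikov conformal identity `(a_λ b)_{λ+μ} c = (-1)^{βγ} (a_λ c)_{-μ-T} b`. -/
def NovLeft2 (G : ZMod 2 → Submodule ℂ R) (p : R → R → VP r R) : Prop :=
  ∀ (β γ : ZMod 2) (a b c : R), b ∈ G β → c ∈ G γ →
    evL r R p (FLM r R) (ev r R (FL r R) (p a b)) c =
      sgn β γ • evL r R p (FNM r R) (ev r R (FL r R) (p a c)) b

/-- `p` is an `r`-dimensional (left) Novikov conformal superalgebra `λ`-product. -/
def IsNovLeft (G : ZMod 2 → Submodule ℂ R) (p : R → R → VP r R) : Prop :=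
  Bilin r R p ∧ ParityPres r R G p ∧ Sesq r R p ∧ NovLeft1 r R G p ∧ NovLeft2 r R G p

/-- Right Novikov conformal identity
`a_λ (b_μ c) - (a_λ b)_{λ+μ} c = (-1)^{βγ} (a_λ (c_{-μ-T} b) - (a_λ c)_{-μ-T} b)`. -/
def NovRight1 (G : ZMod 2 → Submodule ℂ R) (p : R → R → VP r R) : Prop :=
  ∀ (β γ : ZMod 2) (a b c : R), b ∈ G β → c ∈ G γ →
    evR r R p (FL r R) a (ev r R (FM r R) (p b c)) -
      evL r R p (FLM r R) (ev r R (FL r R) (p a b)) c =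
    sgn β γ • (evR r R p (FL r R) a (ev r R (FNM r R) (p c b)) -
      evL r R p (FNM r R) (ev r R (FL r R) (p a c)) b)

/-- Right Novikov conformal identity `a_λ (b_μ c) = (-1)^{αβ} b_μ (a_λ c)`. -/
def NovRight2 (G : ZMod 2 → Submodule ℂ R) (p : R → R → VP r R) : Prop :=
  ∀ (α β : ZMod 2) (a b c : R), a ∈ G α → b ∈ G β →
    evR r R p (FL r R) a (ev r R (FM r R) (p b c)) =
      sgn α β • evR r R p (FM r R) b (ev r R (FL r R) (p a c))

/-- `p` is an `r`-dimensional right Novikov conformal superalgebra `λ`-product. -/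
def IsNovRight (G : ZMod 2 → Submodule ℂ R) (p : R → R → VP r R) : Prop :=
  Bilin r R p ∧ ParityPres r R G p ∧ Sesq r R p ∧ NovRight1 r R G p ∧ NovRight2 r R G p

/-- The compatibility condition of a super Gel'fand-Dorfman conformal bialgebra:
`[(a_{-μ-T} b)_{-λ-T} c] + [a_{-μ-T} b]_{-λ-T} c - a_{-λ-μ-T} [b_{-λ-T} c]`
`- (-1)^{βγ} [(a_{-λ-T} c)_{-μ-T} b] - (-1)^{βγ} [a_{-λ-T} c]_{-μ-T} b = 0`. -/
def GDCompat (G : ZMod 2 → Submodule ℂ R) (p q : R → R → VP r R) : Prop :=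
  ∀ (β γ : ZMod 2) (a b c : R), b ∈ G β → c ∈ G γ →
    evL r R q (FNL r R) (ev r R (FNM r R) (p a b)) c +
    evL r R p (FNL r R) (ev r R (FNM r R) (q a b)) c -
    evR r R p (FNLM r R) a (ev r R (FNL r R) (q b c)) -
    sgn β γ • evL r R q (FNM r R) (ev r R (FNL r R) (p a c)) b -
    sgn β γ • evL r R p (FNM r R) (ev r R (FNL r R) (q a c)) b = 0

/-- `(R, p, q)` is an `r`-dimensional super Gel'fand-Dorfman conformal bialgebra. -/
def IsGDConf (G : ZMod 2 → Submodule ℂ R) (p q : R → R → VP r R) : Prop :=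
  IsNovLeft r R G p ∧ IsLieConfSuper r R G q ∧ GDCompat r R G p q

/-! Ungraded (purely even) versions. -/

def Skew' (q : R → R → VP r R) : Prop :=
  ∀ a b : R, q a b = -(vNeg r R (q b a))

def Jacobi' (q : R → R → VP r R) : Prop :=
  ∀ a b c : R,
    evR r R q (FL r R) a (ev r R (FM r R) (q b c)) =
      evL r R q (FLM r R) (ev r R (FL r R) (q a b)) c +
      evR r R q (FM r R) b (ev r R (FL r R) (q a c))

/-- `q` is an `r`-dimensional Lie conformal algebra `λ`-bracket on `R`. -/
def IsLieConf' (q : R → R → VP r R) : Prop :=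
  Bilin r R q ∧ Sesq r R q ∧ Skew' r R q ∧ Jacobi' r R q

def NovLeft1' (p : R → R → VP r R) : Prop :=
  ∀ a b c : R,
    evL r R p (FLM r R) (ev r R (FL r R) (p a b)) c -
      evR r R p (FL r R) a (ev r R (FM r R) (p b c)) =
    evL r R p (FLM r R) (ev r R (FM r R) (p b a)) c -
      evR r R p (FM r R) b (ev r R (FL r R) (p a c))

def NovLeft2' (p : R → R → VP r R) : Prop :=
  ∀ a b c : R,
    evL r R p (FLM r R) (ev r R (FL r R) (p a b)) c =
      evL r R p (FNM r R) (ev r R (FL r R) (p a c)) b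

/-- `p` is an `r`-dimensional (left) Novikov conformal algebra `λ`-product. -/
def IsNovLeft' (p : R → R → VP r R) : Prop :=
  Bilin r R p ∧ Sesq r R p ∧ NovLeft1' r R p ∧ NovLeft2' r R p

def GDCompat' (p q : R → R → VP r R) : Prop :=
  ∀ a b c : R,
    evL r R q (FNL r R) (ev r R (FNM r R) (p a b)) c +
    evL r R p (FNL r R) (ev r R (FNM r R) (q a b)) c -
    evR r R p (FNLM r R) a (ev r R (FNL r R) (q b c)) -
    evL r R q (FNM r R) (ev r R (FNL r R) (p a c)) b -
    evL r R p (FNM r R) (ev r R (FNL r R) (q a c)) b = 0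

/-- `(R, p, q)` is an `r`-dimensional Gel'fand-Dorfman conformal bialgebra. -/
def IsGDConf' (p q : R → R → VP r R) : Prop :=
  IsNovLeft' r R p ∧ IsLieConf' r R q ∧ GDCompat' r R p q

end

/-! Ordinary (non-conformal) structures on a complex vector space. -/

noncomputable section

variable (V : Type*) [AddCommGroup V] [Module ℂ V]

/-- `ℂ`-bilinearity of an ordinary product. -/
def BilinV (m : V → V → V) : Prop :=
  (∀ a b c : V, m (a + b) c = m a c + m b c) ∧
  (∀ a b c : V, m a (b + c) = m a b + m a c) ∧
  (∀ (z : ℂ) (a b : V), m (z • a) b = z • m a b) ∧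
  (∀ (z : ℂ) (a b : V), m a (z • b) = z • m a b)

def ParityPresV (G : ZMod 2 → Submodule ℂ V) (m : V → V → V) : Prop :=
  ∀ (α β : ZMod 2) (a b : V), a ∈ G α → b ∈ G β → m a b ∈ G (α + β)

/-- `br` is a Lie superalgebra bracket on `V` graded by `G`. -/
def IsLieSuper (G : ZMod 2 → Submodule ℂ V) (br : V → V → V) : Prop :=
  BilinV V br ∧ ParityPresV V G br ∧
  (∀ (α β : ZMod 2) (a b : V), a ∈ G α → b ∈ G β → br a b = -(sgn α β • br b a)) ∧
  (∀ (α β : ZMod 2) (a b : V), a ∈ G α → b ∈ G β → ∀ c : V,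
    br a (br b c) = br (br a b) c + sgn α β • br b (br a c))

/-- `m` is a (left) Novikov superalgebra product on `V` graded by `G`. -/
def IsNovSuper (G : ZMod 2 → Submodule ℂ V) (m : V → V → V) : Prop :=
  BilinV V m ∧ ParityPresV V G m ∧
  (∀ (β γ : ZMod 2) (b c : V), b ∈ G β → c ∈ G γ → ∀ a : V,
    m (m a b) c = sgn β γ • m (m a c) b) ∧
  (∀ (α β : ZMod 2) (a b : V), a ∈ G α → b ∈ G β → ∀ c : V,
    m (m a b) c - m a (m b c) = sgn α β • (m (m b a) c - m b (m a c)))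

/-- `m` is a supercommutative associative product on `V` graded by `G`. -/
def IsCommAssocSuper (G : ZMod 2 → Submodule ℂ V) (m : V → V → V) : Prop :=
  BilinV V m ∧ ParityPresV V G m ∧
  (∀ (α β : ZMod 2) (a b : V), a ∈ G α → b ∈ G β → m a b = sgn α β • m b a) ∧
  (∀ a b c : V, m (m a b) c = m a (m b c))

/-- `(V, m, dot)` is a Novikov-Poisson superalgebra. -/
def IsNovPoissonSuper (G : ZMod 2 → Submodule ℂ V) (m dot : V → V → V) : Prop :=
  IsNovSuper V G m ∧ IsCommAssocSuper V G dot ∧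
  (∀ (α β : ZMod 2) (a b : V), a ∈ G α → b ∈ G β → ∀ c : V,
    dot (m a b) c - m a (dot b c) = sgn α β • (dot (m b a) c - m b (dot a c))) ∧
  (∀ a b c : V, m (dot a b) c = dot a (m b c))

/-- `(V, br, m)` is a super Gel'fand-Dorfman bialgebra. -/
def IsGDSuper (G : ZMod 2 → Submodule ℂ V) (br m : V → V → V) : Prop :=
  IsLieSuper V G br ∧ IsNovSuper V G m ∧
  (∀ (β γ : ZMod 2) (b c : V), b ∈ G β → c ∈ G γ → ∀ a : V,
    br (m a b) c + m (br a b) c - m a (br b c) -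
      sgn β γ • br (m a c) b - sgn β γ • m (br a c) b = 0)

/-- `br` is a Lie algebra bracket on `V`. -/
def IsLieAlg (br : V → V → V) : Prop :=
  BilinV V br ∧ (∀ a b : V, br a b = -br b a) ∧
  (∀ a b c : V, br a (br b c) = br (br a b) c + br b (br a c))

/-- `m` is a (left) Novikov algebra product on `V`. -/
def IsNovAlg (m : V → V → V) : Prop :=
  BilinV V m ∧ (∀ a b c : V, m (m a b) c = m (m a c) b) ∧
  (∀ a b c : V, m (m a b) c - m a (m b c) = m (m b a) c - m b (m a c))

/-- `m` is a commutative associative product on `V`. -/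
def IsCommAssoc (m : V → V → V) : Prop :=
  BilinV V m ∧ (∀ a b : V, m a b = m b a) ∧ (∀ a b c : V, m (m a b) c = m a (m b c))

/-- `(V, m, dot)` is a Novikov-Poisson algebra. -/
def IsNovPoisson (m dot : V → V → V) : Prop :=
  IsNovAlg V m ∧ IsCommAssoc V dot ∧
  (∀ a b c : V, dot (m a b) c - m a (dot b c) = dot (m b a) c - m b (dot a c)) ∧
  (∀ a b c : V, m (dot a b) c = dot a (m b c))

/-- `(V, br, dot)` is a Lie-Poisson algebra. -/
def IsLiePoisson (br dot : V → V → V) : Prop :=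
  IsLieAlg V br ∧ IsCommAssoc V dot ∧
  (∀ a b c : V, br a (dot b c) = dot (br a b) c + dot b (br a c))

/-- `(V, br, m)` is a Gel'fand-Dorfman bialgebra. -/
def IsGD (br m : V → V → V) : Prop :=
  IsLieAlg V br ∧ IsNovAlg V m ∧
  (∀ a b c : V,
    br (m a b) c + m (br a b) c - m a (br b c) - br (m a c) b - m (br a c) b = 0)

end

/-! Free `ℂ[T₁,…,T_r]`-modules on a graded vector space. -/

noncomputable section

variable (r : ℕ) (V : Type*) [AddCommGroup V] [Module ℂ V]

/-- The free `ℂ[T₁,…,T_r]`-module `ℂ[T₁,…,T_r] ⊗ V` on the vector space `V`. -/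
abbrev TR : Type _ := MvPolynomial (Fin r) ℂ ⊗[ℂ] V

/-- The embedding of `V` into `ℂ[T₁,…,T_r] ⊗ V`. -/
def ιT : V → TR r V := fun v => (1 : MvPolynomial (Fin r) ℂ) ⊗ₜ[ℂ] v

/-- The grading of `ℂ[T₁,…,T_r] ⊗ V` induced by a grading of `V` (the `T`'s are even). -/
def TG (G : ZMod 2 → Submodule ℂ V) : ZMod 2 → Submodule ℂ (TR r V) := fun α =>
  Submodule.span ℂ {x : TR r V |
    ∃ (f : MvPolynomial (Fin r) ℂ) (v : V), v ∈ G α ∧ x = f ⊗ₜ[ℂ] v}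

end

/-!
Since `λ ↦ -λ - T` is an involution, skew-symmetry of `q` is immediate, and sesquilinearity
follows from that of `p`. For the Jacobi identity, all three terms are expanded (for homogeneous
`a, b, c`) into twelve composites `(x_g y)_Φ z` and `x_Φ (y_g z)` of `p` (`cL`, `cR`), where
`g` and `Φ` range over the families `λ, μ, λ + μ, -λ - T, -μ - T, -λ - μ - T`. These cancel in
three groups, each of which is an instance of the first Novikov identity alone (left, resp.
right symmetry): the identity itself and its images under `(λ, μ) ↦ (-λ - μ - T, λ)` and
`(-λ - μ - T, μ)` (resp. `(μ, λ)` and `(-λ - μ - T, λ)`). These substitutions are legitimate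
because all the families lie in the commutative ring of operators generated by the shifts and the
`T i` (`opRing`).
-/

noncomputable section

section PiPow

variable {M : Type*} [Monoid M]

def piPow {n : ℕ} (A : Fin n → M) (k : Fin n →₀ ℕ) : M :=
  (List.ofFn fun i => A i ^ k i).prod

lemma piPow_zero {n : ℕ} (A : Fin n → M) : piPow A 0 = 1 := by
  simp [piPow]

lemma list_ofFn_prod_mul {n : ℕ} (f g : Fin n → M) (h : ∀ i j, Commute (f i) (g j)) :
    (List.ofFn fun i => f i * g i).prod = (List.ofFn f).prod * (List.ofFn g).prod := by
  induction n with
  | zero => simp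
  | succ n ih =>
    have hg : Commute (g 0) (List.ofFn fun i : Fin n => f i.succ).prod :=
      Commute.list_prod_right _ _ fun x hx => by
        obtain ⟨i, rfl⟩ := List.mem_ofFn.mp hx
        exact (h i.succ 0).symm
    simp only [List.ofFn_succ, List.prod_cons,
      ih (fun i => f i.succ) (fun i => g i.succ) fun i j => h i.succ j.succ]
    rw [mul_assoc, ← mul_assoc (g 0), hg.eq, mul_assoc, mul_assoc]

lemma piPow_add {n : ℕ} (A : Fin n → M) (hA : ∀ i j, Commute (A i) (A j)) (k m : Fin n →₀ ℕ) :
    piPow A (k + m) = piPow A k * piPow A m := by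
  simp only [piPow, Finsupp.add_apply, pow_add]
  exact list_ofFn_prod_mul _ _ fun i j => (hA i j).pow_pow _ _

lemma piPow_single {n : ℕ} (A : Fin n → M) (i : Fin n) (m : ℕ) :
    piPow A (Finsupp.single i m) = A i ^ m := by
  induction n with
  | zero => exact i.elim0
  | succ n ih =>
    simp only [piPow] at ih ⊢
    rw [List.ofFn_succ, List.prod_cons]
    rcases Fin.eq_zero_or_eq_succ i with rfl | ⟨j, rfl⟩
    · simp [Fin.succ_ne_zero]
    · simpa [Finsupp.single_apply, Fin.succ_ne_zero, Fin.succ_inj] using ih (A ∘ Fin.succ) j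

lemma piPow_add_single {n : ℕ} (A : Fin n → M) (hA : ∀ i j, Commute (A i) (A j))
    (k : Fin n →₀ ℕ) (i : Fin n) : piPow A (k + Finsupp.single i 1) = A i * piPow A k := by
  rw [add_comm, piPow_add A hA, piPow_single, pow_one]

lemma piPow_mem {S : Type*} [SetLike S M] [SubmonoidClass S M] {s : S} {n : ℕ}
    {A : Fin n → M} (hA : ∀ i, A i ∈ s) (k : Fin n →₀ ℕ) : piPow A k ∈ s :=
  list_prod_mem fun x hx => by
    obtain ⟨i, rfl⟩ := List.mem_ofFn.mp hx
    exact pow_mem (hA i) _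

end PiPow

lemma map_piPow_apply {V W : Type*} [AddCommMonoid V] [Module ℂ V] [AddCommMonoid W]
    [Module ℂ W] (F : V → W) {n : ℕ} (A : Fin n → Module.End ℂ V)
    (A' : Fin n → Module.End ℂ W) (h : ∀ i x, F (A i x) = A' i (F x)) (k : Fin n →₀ ℕ)
    (x : V) : F (piPow A k x) = piPow A' k (F x) := by
  have hpow (i : Fin n) (m : ℕ) (x : V) : F ((A i ^ m) x) = (A' i ^ m) (F x) := by
    induction m generalizing x with
    | zero => rfl
    | succ m ih => rw [pow_succ, Module.End.mul_apply, ih, h, pow_succ, Module.End.mul_apply]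
  simp only [piPow]
  generalize hk : (k : Fin n → ℕ) = k'
  clear hk k h
  induction n generalizing x with
  | zero => rfl
  | succ n ih =>
    simp only [List.ofFn_succ, List.prod_cons, Module.End.mul_apply, hpow]
    exact congrArg _ (ih (A ∘ Fin.succ) (A' ∘ Fin.succ) _ (fun i => hpow i.succ) _)

section Coefficients

lemma commute_apply {M : Type*} [AddCommGroup M] [Module ℂ M] {A B : Module.End ℂ M}
    (h : Commute A B) (x : M) : A (B x) = B (A x) :=
  LinearMap.congr_fun h.eq x

def endStabilizer {M : Type*} [AddCommGroup M] [Module ℂ M] (P : Submodule ℂ M) :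
    Subring (Module.End ℂ M) where
  carrier := {A | ∀ x ∈ P, A x ∈ P}
  mul_mem' hA hB x hx := hA _ (hB x hx)
  one_mem' _ hx := hx
  add_mem' hA hB x hx := P.add_mem (hA x hx) (hB x hx)
  zero_mem' _ _ := P.zero_mem
  neg_mem' hA x hx := P.neg_mem (hA x hx)

variable {R : Type*} [AddCommGroup R] [Module ℂ R]

variable (κ : Type*) in
def coeffIn (N : Submodule ℂ R) : Submodule ℂ (κ →₀ R) where
  carrier := {F | ∀ k, F k ∈ N}
  add_mem' hF hG k := N.add_mem (hF k) (hG k)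
  zero_mem' _ := N.zero_mem
  smul_mem' c _ hF k := N.smul_mem c (hF k)

lemma single_mem_coeffIn {κ : Type*} {N : Submodule ℂ R} (k : κ) {v : R} (hv : v ∈ N) :
    Finsupp.single k v ∈ coeffIn κ N := fun j => by
  classical
  rw [Finsupp.single_apply]
  split_ifs
  exacts [hv, N.zero_mem]

end Coefficients

section Operators

variable {r : ℕ} {R : Type*} [AddCommGroup R] [Module ℂ R] {κ : Type*} [AddCommMonoid κ]

variable (R) in
def shiftOp (e : κ) : Module.End ℂ (κ →₀ R) :=
  Finsupp.lmapDomain R ℂ (· + e)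

lemma shiftOp_mul_shiftOp (d e : κ) : shiftOp R d * shiftOp R e = shiftOp R (e + d) := by
  refine LinearMap.ext fun F => ?_
  simp only [shiftOp, Module.End.mul_apply, Finsupp.lmapDomain_apply,
    ← Finsupp.mapDomain_comp]
  congr 1
  funext x
  exact add_assoc x e d

lemma shiftOp_single (d e : κ) (v : R) :
    shiftOp R d (Finsupp.single e v) = Finsupp.single (e + d) v :=
  Finsupp.mapDomain_single

lemma shiftOp_zero : shiftOp R (0 : κ) = 1 :=
  LinearMap.ext fun F => by
    simp only [shiftOp, add_zero, Finsupp.lmapDomain_apply, Module.End.one_apply]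
    exact Finsupp.mapDomain_id

variable [Module (MvPolynomial (Fin r) ℂ) R] [IsScalarTower ℂ (MvPolynomial (Fin r) ℂ) R]

variable (r R κ) in
def tOp (i : Fin r) : Module.End ℂ (κ →₀ R) :=
  Finsupp.mapRange.linearMap (tAct r R i)

variable (r R κ) in
def opRing : Subring (Module.End ℂ (κ →₀ R)) :=
  Subring.closure (Set.range (shiftOp R (κ := κ)) ∪ Set.range (tOp r R κ))

lemma shiftOp_mem (e : κ) : shiftOp R e ∈ opRing r R κ :=
  Subring.subset_closure (Or.inl ⟨e, rfl⟩)

lemma tOp_mem (i : Fin r) : tOp r R κ i ∈ opRing r R κ :=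
  Subring.subset_closure (Or.inr ⟨i, rfl⟩)

lemma commute_shiftOp_tOp (e : κ) (i : Fin r) : Commute (shiftOp R e) (tOp r R κ i) :=
  LinearMap.ext fun F => Finsupp.mapDomain_mapRange _ F _ (map_zero _) (map_add _)

omit [AddCommMonoid κ] in
lemma tOp_single (i : Fin r) (k : κ) (v : R) :
    tOp r R κ i (Finsupp.single k v) = Finsupp.single k (tAct r R i v) := by
  simp [tOp]

omit [AddCommMonoid κ] in
lemma commute_tOp_tOp (i j : Fin r) : Commute (tOp r R κ i) (tOp r R κ j) := by
  refine LinearMap.ext fun F => Finsupp.ext fun k => ?_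
  simp only [tOp, Module.End.mul_apply, Finsupp.mapRange.linearMap_apply,
    Finsupp.mapRange_apply, tAct, LinearMap.coe_mk, AddHom.coe_mk, smul_smul, mul_comm]

lemma commute_of_mem_opRing {A B : Module.End ℂ (κ →₀ R)} (hA : A ∈ opRing r R κ)
    (hB : B ∈ opRing r R κ) : Commute A B := by
  refine Set.centralizer_centralizer_comm_of_comm ?_ A
    (Subring.closure_le_centralizer_centralizer _ hA) B
    (Subring.closure_le_centralizer_centralizer _ hB)
  rintro _ (⟨d, rfl⟩ | ⟨i, rfl⟩) _ (⟨e, rfl⟩ | ⟨j, rfl⟩)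
  · rw [shiftOp_mul_shiftOp, shiftOp_mul_shiftOp, add_comm]
  · exact commute_shiftOp_tOp d j
  · exact (commute_shiftOp_tOp e i).symm
  · exact commute_tOp_tOp i j

lemma opRing_le_endStabilizer {N : Submodule ℂ R}
    (hN : ∀ (i : Fin r) (v : R), v ∈ N → (X i : MvPolynomial (Fin r) ℂ) • v ∈ N) :
    opRing r R κ ≤ endStabilizer (coeffIn κ N) := by
  refine Subring.closure_le.mpr ?_
  rintro _ (⟨e, rfl⟩ | ⟨i, rfl⟩) F hF
  · show Finsupp.mapDomain _ F ∈ coeffIn κ N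
    exact Submodule.finsuppSum_mem _ _ _ _ fun a _ => single_mem_coeffIn _ (hF a)
  · exact fun k => hN i _ (hF k)

end Operators

section Subst

variable {r : ℕ} {R : Type*} [AddCommGroup R] [Module ℂ R] {κ : Type*} [AddCommMonoid κ]

/-- `Σ_k λ^k v_k ↦ Σ_k s^k v_k`, each `v_k` read as a constant. -/
def subst (s : Fin r → Module.End ℂ (κ →₀ R)) : VP r R →ₗ[ℂ] κ →₀ R :=
  Finsupp.lsum ℂ fun k => piPow s k ∘ₗ Finsupp.lsingle 0

lemma ev_eq_subst (s : Fin r → Module.End ℂ (BP r R)) : ev r R s = subst s := rfl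

lemma subst_apply (s : Fin r → Module.End ℂ (κ →₀ R)) (F : VP r R) :
    subst s F = F.sum fun k v => piPow s k (Finsupp.single 0 v) := rfl

lemma subst_single (s : Fin r → Module.End ℂ (κ →₀ R)) (k : Fin r →₀ ℕ) (v : R) :
    subst s (Finsupp.single k v) = piPow s k (Finsupp.single 0 v) := by
  simp [subst]

lemma subst_single_zero (s : Fin r → Module.End ℂ (κ →₀ R)) (v : R) :
    subst s (Finsupp.single 0 v) = Finsupp.single 0 v := by
  rw [subst_single, piPow_zero, Module.End.one_apply]

lemma map_subst {κ' : Type*} [AddCommMonoid κ'] (T : (κ →₀ R) →+ (κ' →₀ R))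
    (g : Fin r → Module.End ℂ (κ →₀ R)) (g' : Fin r → Module.End ℂ (κ' →₀ R))
    (hT : ∀ i x, T (g i x) = g' i (T x)) (F : VP r R) :
    T (subst g F) = F.sum fun k u => piPow g' k (T (Finsupp.single 0 u)) := by
  rw [subst_apply, map_finsuppSum]
  exact Finsupp.sum_congr fun k _ => map_piPow_apply T g g' hT k _

lemma map_subst_of_single_zero {κ' : Type*} [AddCommMonoid κ'] (T : (κ →₀ R) →+ (κ' →₀ R))
    (g : Fin r → Module.End ℂ (κ →₀ R)) (g' : Fin r → Module.End ℂ (κ' →₀ R))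
    (hT : ∀ i x, T (g i x) = g' i (T x)) (hT0 : ∀ u, T (Finsupp.single 0 u) = Finsupp.single 0 u)
    (F : VP r R) : T (subst g F) = subst g' F := by
  rw [map_subst T g g' hT]
  simp only [hT0, subst_apply]

lemma vLam_eq (i : Fin r) : vLam r R i = shiftOp R (Finsupp.single i 1) := rfl

variable [Module (MvPolynomial (Fin r) ℂ) R] [IsScalarTower ℂ (MvPolynomial (Fin r) ℂ) R]

lemma vT_eq (i : Fin r) : vT r R i = tOp r R _ i := rfl

lemma subst_vLam {s : Fin r → Module.End ℂ (κ →₀ R)} (hs : ∀ i, s i ∈ opRing r R κ)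
    (i : Fin r) (F : VP r R) : subst s (vLam r R i F) = s i (subst s F) := by
  suffices h : subst s ∘ₗ vLam r R i = s i ∘ₗ subst s from LinearMap.congr_fun h F
  refine Finsupp.lhom_ext fun k v => ?_
  simp only [LinearMap.comp_apply, vLam_eq, shiftOp_single, subst_single,
    piPow_add_single s fun i j => commute_of_mem_opRing (hs i) (hs j),
    Module.End.mul_apply]

lemma subst_vT {s : Fin r → Module.End ℂ (κ →₀ R)} (hs : ∀ i, s i ∈ opRing r R κ)
    (i : Fin r) (F : VP r R) : subst s (vT r R i F) = tOp r R κ i (subst s F) := by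
  suffices h : subst s ∘ₗ vT r R i = tOp r R κ i ∘ₗ subst s from LinearMap.congr_fun h F
  refine Finsupp.lhom_ext fun k v => ?_
  simp only [LinearMap.comp_apply, vT_eq, tOp_single, subst_single]
  rw [← tOp_single, ← Module.End.mul_apply, ← Module.End.mul_apply,
    (commute_of_mem_opRing (piPow_mem hs k) (tOp_mem i)).eq]

end Subst

section Reflection

variable {r : ℕ} {R : Type*} [AddCommGroup R] [Module ℂ R]
  [Module (MvPolynomial (Fin r) ℂ) R] [IsScalarTower ℂ (MvPolynomial (Fin r) ℂ) R]

variable (r R) in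
def vFNL : Fin r → Module.End ℂ (VP r R) := fun i => -(vLam r R i) - vT r R i

lemma vNeg_eq_subst : vNeg r R = subst (vFNL r R) := rfl

lemma vLam_mem (i : Fin r) : vLam r R i ∈ opRing r R (Fin r →₀ ℕ) := shiftOp_mem _

lemma vT_mem (i : Fin r) : vT r R i ∈ opRing r R (Fin r →₀ ℕ) := tOp_mem i

lemma vFNL_mem (i : Fin r) : vFNL r R i ∈ opRing r R (Fin r →₀ ℕ) :=
  sub_mem (neg_mem (vLam_mem i)) (vT_mem i)

variable {κ : Type*} [AddCommMonoid κ]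

lemma subst_vFNL {s : Fin r → Module.End ℂ (κ →₀ R)} (hs : ∀ i, s i ∈ opRing r R κ)
    (i : Fin r) (F : VP r R) :
    subst s (vFNL r R i F) = (-(s i) - tOp r R κ i) (subst s F) := by
  simp only [vFNL, LinearMap.sub_apply, LinearMap.neg_apply, map_sub, map_neg]
  rw [subst_vLam hs, subst_vT hs]

lemma piPow_vLam (k : Fin r →₀ ℕ) : piPow (vLam r R) k = shiftOp R k := by
  have hsingle (i : Fin r) (n : ℕ) : vLam r R i ^ n = shiftOp R (Finsupp.single i n) := by
    induction n with
    | zero => rw [pow_zero, Finsupp.single_zero, shiftOp_zero]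
    | succ n ih => rw [pow_succ, ih, vLam_eq, shiftOp_mul_shiftOp, ← Finsupp.single_add, add_comm]
  induction k using Finsupp.induction with
  | zero => rw [piPow_zero, shiftOp_zero]
  | single_add i n k _ _ ih =>
    rw [piPow_add _ (fun i j => commute_of_mem_opRing (vLam_mem i) (vLam_mem j)), ih,
      piPow_single, hsingle, shiftOp_mul_shiftOp, add_comm]

lemma subst_vLam_eq_id : subst (vLam r R) = LinearMap.id := by
  refine Finsupp.lhom_ext fun k v => ?_
  simp [subst_single, piPow_vLam, shiftOp]

lemma vNeg_vFNL (i : Fin r) (F : VP r R) : vNeg r R (vFNL r R i F) = vLam r R i (vNeg r R F) := by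
  rw [vNeg_eq_subst, subst_vFNL vFNL_mem,
    show -(vFNL r R i) - tOp r R _ i = vLam r R i by rw [vFNL, vT_eq]; abel]

lemma vNeg_vNeg (F : VP r R) : vNeg r R (vNeg r R F) = F :=
  (map_subst_of_single_zero (subst (vFNL r R)).toAddMonoidHom _ (vLam r R) vNeg_vFNL
    (subst_single_zero _) F).trans (LinearMap.congr_fun subst_vLam_eq_id F)

lemma ev_vNeg {s : Fin r → Module.End ℂ (BP r R)} (hs : ∀ i, s i ∈ opRing r R _)
    (F : VP r R) : ev r R s (vNeg r R F) = ev r R (fun i => -(s i) - bT r R i) F :=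
  map_subst_of_single_zero (subst s).toAddMonoidHom _ _ (subst_vFNL hs) (subst_single_zero s) F

end Reflection

section Families

variable {r : ℕ} {R : Type*} [AddCommGroup R] [Module ℂ R]
  [Module (MvPolynomial (Fin r) ℂ) R] [IsScalarTower ℂ (MvPolynomial (Fin r) ℂ) R]

omit [Module (MvPolynomial (Fin r) ℂ) R] [IsScalarTower ℂ (MvPolynomial (Fin r) ℂ) R] in
lemma bShift_eq (e : (Fin r ⊕ Fin r) →₀ ℕ) : bShift r R e = shiftOp R e := rfl

lemma bT_eq (i : Fin r) : bT r R i = tOp r R _ i := rfl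

lemma bShift_mem (e : (Fin r ⊕ Fin r) →₀ ℕ) : bShift r R e ∈ opRing r R _ := shiftOp_mem e

lemma bT_mem (i : Fin r) : bT r R i ∈ opRing r R _ := tOp_mem i

lemma FL_mem (i : Fin r) : FL r R i ∈ opRing r R _ := shiftOp_mem _

lemma FM_mem (i : Fin r) : FM r R i ∈ opRing r R _ := shiftOp_mem _

lemma FLM_mem (i : Fin r) : FLM r R i ∈ opRing r R _ := add_mem (FL_mem i) (FM_mem i)

lemma FNL_mem (i : Fin r) : FNL r R i ∈ opRing r R _ := sub_mem (neg_mem (FL_mem i)) (bT_mem i)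

lemma FNM_mem (i : Fin r) : FNM r R i ∈ opRing r R _ := sub_mem (neg_mem (FM_mem i)) (bT_mem i)

lemma FNLM_mem (i : Fin r) : FNLM r R i ∈ opRing r R _ :=
  sub_mem (sub_mem (neg_mem (FL_mem i)) (FM_mem i)) (bT_mem i)

end Families

section FamilyIdentities

variable {r : ℕ} {R : Type*} [AddCommGroup R] [Module ℂ R]
  [Module (MvPolynomial (Fin r) ℂ) R] [IsScalarTower ℂ (MvPolynomial (Fin r) ℂ) R]

variable (r R)

lemma neg_FL_sub_bT : (fun i => -(FL r R i) - bT r R i) = FNL r R := rfl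

lemma neg_FM_sub_bT : (fun i => -(FM r R i) - bT r R i) = FNM r R := rfl

lemma neg_FLM_sub_bT : (fun i => -(FLM r R i) - bT r R i) = FNLM r R := by
  funext i; simp only [FLM, FNLM]; abel

lemma FNM_sub_FL : (fun i => FNM r R i - FL r R i) = FNLM r R := by
  funext i; simp only [FNM, FL, FNLM]; abel

lemma FNL_sub_FM : (fun i => FNL r R i - FM r R i) = FNLM r R := by
  funext i; simp only [FNL, FM, FNLM]; abel

omit [Module (MvPolynomial (Fin r) ℂ) R] [IsScalarTower ℂ (MvPolynomial (Fin r) ℂ) R] in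
lemma FLM_sub_FL : (fun i => FLM r R i - FL r R i) = FM r R := by
  funext i; simp only [FLM, FL, FM]; abel

lemma FNL_sub_FNLM : (fun i => FNL r R i - FNLM r R i) = FM r R := by
  funext i; simp only [FNL, FNLM, FM]; abel

omit [Module (MvPolynomial (Fin r) ℂ) R] [IsScalarTower ℂ (MvPolynomial (Fin r) ℂ) R] in
lemma FM_add_FL : (fun i => FM r R i + FL r R i) = FLM r R := by
  funext i; exact add_comm _ _

lemma FNLM_add_FL : (fun i => FNLM r R i + FL r R i) = FNM r R := by
  funext i; simp only [FNLM, FL, FNM]; abel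

lemma FNLM_add_FM : (fun i => FNLM r R i + FM r R i) = FNL r R := by
  funext i; simp only [FNLM, FM, FNL]; abel

lemma neg_FM_sub_FL_sub_bT : (fun i => -(FM r R i) - FL r R i - bT r R i) = FNLM r R := by
  funext i; simp only [FM, FL, FNLM]; abel

lemma neg_FNLM_sub_FL_sub_bT : (fun i => -(FNLM r R i) - FL r R i - bT r R i) = FM r R := by
  funext i; simp only [FNLM, FL, FM]; abel

end FamilyIdentities

section Extension

variable {r : ℕ} {R : Type*} [AddCommGroup R] [Module ℂ R] {p : R → R → VP r R}

lemma Bilin.zero_left (hp : Bilin r R p) (b : R) : p 0 b = 0 :=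
  left_eq_add.mp (by rw [← hp.1, add_zero] : p 0 b = p 0 b + p 0 b)

lemma Bilin.zero_right (hp : Bilin r R p) (a : R) : p a 0 = 0 :=
  left_eq_add.mp (by rw [← hp.2.1, add_zero] : p a 0 = p a 0 + p a 0)

variable (p) in
def evLHom (hp : Bilin r R p) (s : Fin r → Module.End ℂ (BP r R)) (b : R) : BP r R →+ BP r R :=
  Finsupp.liftAddHom fun e => (bShift r R e).toAddMonoidHom.comp
    ((subst s).toAddMonoidHom.comp (AddMonoidHom.mk' (p · b) fun u v => hp.1 u v b))

variable (p) in
def evRHom (hp : Bilin r R p) (s : Fin r → Module.End ℂ (BP r R)) (a : R) : BP r R →+ BP r R :=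
  Finsupp.liftAddHom fun e => (bShift r R e).toAddMonoidHom.comp
    ((subst s).toAddMonoidHom.comp (AddMonoidHom.mk' (p a) (hp.2.1 a)))

lemma evLHom_apply (hp : Bilin r R p) (s : Fin r → Module.End ℂ (BP r R)) (b : R) (F : BP r R) :
    evLHom p hp s b F = evL r R p s F b := rfl

lemma evRHom_apply (hp : Bilin r R p) (s : Fin r → Module.End ℂ (BP r R)) (a : R) (F : BP r R) :
    evRHom p hp s a F = evR r R p s a F := rfl

lemma evL_single (hp : Bilin r R p) (s : Fin r → Module.End ℂ (BP r R))
    (e : (Fin r ⊕ Fin r) →₀ ℕ) (u b : R) :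
    evL r R p s (Finsupp.single e u) b = bShift r R e (ev r R s (p u b)) :=
  Finsupp.sum_single_index (by rw [hp.zero_left, ev_eq_subst, map_zero, map_zero])

lemma evR_single (hp : Bilin r R p) (s : Fin r → Module.End ℂ (BP r R))
    (e : (Fin r ⊕ Fin r) →₀ ℕ) (a u : R) :
    evR r R p s a (Finsupp.single e u) = bShift r R e (ev r R s (p a u)) :=
  Finsupp.sum_single_index (by rw [hp.zero_right, ev_eq_subst, map_zero, map_zero])

lemma evL_single_zero (hp : Bilin r R p) (s : Fin r → Module.End ℂ (BP r R)) (u b : R) :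
    evL r R p s (Finsupp.single 0 u) b = ev r R s (p u b) := by
  rw [evL_single hp, bShift_eq, shiftOp_zero, Module.End.one_apply]

lemma evR_single_zero (hp : Bilin r R p) (s : Fin r → Module.End ℂ (BP r R)) (a u : R) :
    evR r R p s a (Finsupp.single 0 u) = ev r R s (p a u) := by
  rw [evR_single hp, bShift_eq, shiftOp_zero, Module.End.one_apply]

lemma evL_bShift (hp : Bilin r R p) (s : Fin r → Module.End ℂ (BP r R))
    (d : (Fin r ⊕ Fin r) →₀ ℕ) (F : BP r R) (b : R) :
    evL r R p s (bShift r R d F) b = bShift r R d (evL r R p s F b) := by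
  simp only [← evLHom_apply hp]
  refine DFunLike.congr_fun (?_ : (evLHom p hp s b).comp (bShift r R d).toAddMonoidHom =
    (bShift r R d).toAddMonoidHom.comp (evLHom p hp s b)) F
  refine Finsupp.addHom_ext fun e v => ?_
  simp only [AddMonoidHom.comp_apply, LinearMap.toAddMonoidHom_coe, bShift_eq, shiftOp_single,
    evLHom_apply, evL_single hp, ← Module.End.mul_apply, shiftOp_mul_shiftOp]

lemma evR_bShift (hp : Bilin r R p) (s : Fin r → Module.End ℂ (BP r R))
    (a : R) (d : (Fin r ⊕ Fin r) →₀ ℕ) (F : BP r R) :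
    evR r R p s a (bShift r R d F) = bShift r R d (evR r R p s a F) := by
  simp only [← evRHom_apply hp]
  refine DFunLike.congr_fun (?_ : (evRHom p hp s a).comp (bShift r R d).toAddMonoidHom =
    (bShift r R d).toAddMonoidHom.comp (evRHom p hp s a)) F
  refine Finsupp.addHom_ext fun e v => ?_
  simp only [AddMonoidHom.comp_apply, LinearMap.toAddMonoidHom_coe, bShift_eq, shiftOp_single,
    evRHom_apply, evR_single hp, ← Module.End.mul_apply, shiftOp_mul_shiftOp]

end Extension

section Sesquilinear

variable {r : ℕ} {R : Type*} [AddCommGroup R] [Module ℂ R]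
  [Module (MvPolynomial (Fin r) ℂ) R] [IsScalarTower ℂ (MvPolynomial (Fin r) ℂ) R]
  {p : R → R → VP r R} {s : Fin r → Module.End ℂ (BP r R)}

lemma tAct_apply (i : Fin r) (v : R) : tAct r R i v = (X i : MvPolynomial (Fin r) ℂ) • v := rfl

lemma evL_bT (hp : Bilin r R p) (hses : Sesq r R p) (hs : ∀ i, s i ∈ opRing r R _) (i : Fin r)
    (F : BP r R) (b : R) : evL r R p s (bT r R i F) b = -(s i (evL r R p s F b)) := by
  simp only [← evLHom_apply hp]
  refine DFunLike.congr_fun (?_ : (evLHom p hp s b).comp (bT r R i).toAddMonoidHom =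
    ((-(s i)).toAddMonoidHom.comp (evLHom p hp s b))) F
  refine Finsupp.addHom_ext fun e v => ?_
  simp only [AddMonoidHom.comp_apply, LinearMap.toAddMonoidHom_coe, bT_eq, tOp_single,
    evLHom_apply, evL_single hp, tAct_apply, (hses i v b).1, LinearMap.neg_apply, map_neg,
    ev_eq_subst, subst_vLam hs, commute_apply (commute_of_mem_opRing (bShift_mem e) (hs i))]

lemma evR_bT (hp : Bilin r R p) (hses : Sesq r R p) (hs : ∀ i, s i ∈ opRing r R _) (a : R)
    (i : Fin r) (F : BP r R) : evR r R p s a (bT r R i F) = (bT r R i + s i) (evR r R p s a F) := by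
  simp only [← evRHom_apply hp]
  refine DFunLike.congr_fun (?_ : (evRHom p hp s a).comp (bT r R i).toAddMonoidHom =
    ((bT r R i + s i).toAddMonoidHom.comp (evRHom p hp s a))) F
  refine Finsupp.addHom_ext fun e v => ?_
  simp only [AddMonoidHom.comp_apply, LinearMap.toAddMonoidHom_coe, bT_eq, tOp_single,
    evRHom_apply, evR_single hp, tAct_apply, (hses i a v).2, LinearMap.add_apply, map_add,
    ev_eq_subst, subst_vLam hs, subst_vT hs,
    commute_apply (commute_of_mem_opRing (bShift_mem e) (hs i)),
    commute_apply (commute_of_mem_opRing (bShift_mem e) (tOp_mem i))]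

lemma evL_neg_bShift_sub_bT (hp : Bilin r R p) (hses : Sesq r R p)
    (hs : ∀ i, s i ∈ opRing r R _) (d : (Fin r ⊕ Fin r) →₀ ℕ) (i : Fin r) (F : BP r R) (b : R) :
    evL r R p s ((-(bShift r R d) - bT r R i) F) b = (s i - bShift r R d) (evL r R p s F b) := by
  simp only [LinearMap.sub_apply, LinearMap.neg_apply, ← evLHom_apply hp, map_sub, map_neg]
  simp only [evLHom_apply, evL_bShift hp, evL_bT hp hses hs]
  abel

lemma evR_neg_bShift_sub_bT (hp : Bilin r R p) (hses : Sesq r R p)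
    (hs : ∀ i, s i ∈ opRing r R _) (a : R) (d : (Fin r ⊕ Fin r) →₀ ℕ) (i : Fin r) (F : BP r R) :
    evR r R p s a ((-(bShift r R d) - bT r R i) F) =
      (-(bShift r R d) - bT r R i - s i) (evR r R p s a F) := by
  simp only [LinearMap.sub_apply, LinearMap.neg_apply, ← evRHom_apply hp, map_sub, map_neg]
  simp only [evRHom_apply, evR_bShift hp, evR_bT hp hses hs, LinearMap.add_apply]
  abel

end Sesquilinear

section Canonical

variable {r : ℕ} {R : Type*} [AddCommGroup R] [Module ℂ R]

variable (p : R → R → VP r R)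

/-- `(x_g y)_Φ z`: expand `x_λ y = Σ_k λ^k u_k`, and put `g` for `λ` in `Σ_k λ^k (u_k)_Φ z`. -/
def cL (g Φ : Fin r → Module.End ℂ (BP r R)) (x y z : R) : BP r R :=
  (p x y).sum fun k u => piPow g k (ev r R Φ (p u z))

/-- `x_Φ (y_g z)`: expand `y_λ z = Σ_k λ^k u_k`, and put `g` for `λ` in `Σ_k λ^k x_Φ u_k`. -/
def cR (g Φ : Fin r → Module.End ℂ (BP r R)) (x y z : R) : BP r R :=
  (p y z).sum fun k u => piPow g k (ev r R Φ (p x u))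

variable {p}

lemma evL_ev (hp : Bilin r R p) (Φ g g' : Fin r → Module.End ℂ (BP r R)) {z : R}
    (hg : ∀ i X, evL r R p Φ (g i X) z = g' i (evL r R p Φ X z)) (x y : R) :
    evL r R p Φ (ev r R g (p x y)) z = cL p g' Φ x y z :=
  (map_subst (evLHom p hp Φ z) g g' hg (p x y)).trans
    (Finsupp.sum_congr fun _ _ => by rw [evLHom_apply, evL_single_zero hp])

lemma evR_ev (hp : Bilin r R p) (Φ g g' : Fin r → Module.End ℂ (BP r R)) {x : R}
    (hg : ∀ i X, evR r R p Φ x (g i X) = g' i (evR r R p Φ x X)) (y z : R) :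
    evR r R p Φ x (ev r R g (p y z)) = cR p g' Φ x y z :=
  (map_subst (evRHom p hp Φ x) g g' hg (p y z)).trans
    (Finsupp.sum_congr fun _ _ => by rw [evRHom_apply, evR_single_zero hp])

end Canonical

section Subst2

variable {r : ℕ} {R : Type*} [AddCommGroup R] [Module ℂ R] {f g : Fin r → Module.End ℂ (BP r R)}

lemma sumFinsuppAddEquivProdFinsupp_single_inl (i : Fin r) (n : ℕ) :
    Finsupp.sumFinsuppAddEquivProdFinsupp (Finsupp.single (Sum.inl i : Fin r ⊕ Fin r) n) =
      (Finsupp.single i n, 0) := by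
  ext j <;> simp [Finsupp.single_apply]

lemma sumFinsuppAddEquivProdFinsupp_single_inr (i : Fin r) (n : ℕ) :
    Finsupp.sumFinsuppAddEquivProdFinsupp (Finsupp.single (Sum.inr i : Fin r ⊕ Fin r) n) =
      (0, Finsupp.single i n) := by
  ext j <;> simp [Finsupp.single_apply]

variable (f g) in
/-- Substitution of `f` for the `λ`'s (`Sum.inl`) and of `g` for the `μ`'s (`Sum.inr`). -/
def subst2 : Module.End ℂ (BP r R) :=
  Finsupp.lsum ℂ fun e => (piPow f (Finsupp.sumFinsuppAddEquivProdFinsupp e).1 *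
    piPow g (Finsupp.sumFinsuppAddEquivProdFinsupp e).2) ∘ₗ Finsupp.lsingle 0

lemma subst2_single (e : (Fin r ⊕ Fin r) →₀ ℕ) (v : R) :
    subst2 f g (Finsupp.single e v) = (piPow f (Finsupp.sumFinsuppAddEquivProdFinsupp e).1 *
      piPow g (Finsupp.sumFinsuppAddEquivProdFinsupp e).2) (Finsupp.single 0 v) := by
  simp [subst2]

lemma subst2_single_zero (v : R) : subst2 f g (Finsupp.single 0 v) = Finsupp.single 0 v := by
  simp [subst2_single, piPow_zero]

lemma subst2_ev {ψ ψ' : Fin r → Module.End ℂ (BP r R)}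
    (hψ : ∀ i X, subst2 f g (ψ i X) = ψ' i (subst2 f g X)) (W : VP r R) :
    subst2 f g (ev r R ψ W) = ev r R ψ' W :=
  map_subst_of_single_zero (subst2 f g).toAddMonoidHom ψ ψ' hψ subst2_single_zero W

lemma subst2_cL (p : R → R → VP r R) {φ φ' ψ ψ' : Fin r → Module.End ℂ (BP r R)}
    (hφ : ∀ i X, subst2 f g (φ i X) = φ' i (subst2 f g X))
    (hψ : ∀ i X, subst2 f g (ψ i X) = ψ' i (subst2 f g X)) (x y z : R) :
    subst2 f g (cL p φ ψ x y z) = cL p φ' ψ' x y z := by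
  rw [cL, cL, map_finsuppSum]
  exact Finsupp.sum_congr fun k _ => by rw [map_piPow_apply _ φ φ' hφ, subst2_ev hψ]

lemma subst2_cR (p : R → R → VP r R) {φ φ' ψ ψ' : Fin r → Module.End ℂ (BP r R)}
    (hφ : ∀ i X, subst2 f g (φ i X) = φ' i (subst2 f g X))
    (hψ : ∀ i X, subst2 f g (ψ i X) = ψ' i (subst2 f g X)) (x y z : R) :
    subst2 f g (cR p φ ψ x y z) = cR p φ' ψ' x y z := by
  rw [cR, cR, map_finsuppSum]
  exact Finsupp.sum_congr fun k _ => by rw [map_piPow_apply _ φ φ' hφ, subst2_ev hψ]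

variable [Module (MvPolynomial (Fin r) ℂ) R] [IsScalarTower ℂ (MvPolynomial (Fin r) ℂ) R]

lemma subst2_bLam (hf : ∀ i, f i ∈ opRing r R _) (i : Fin r) (X : BP r R) :
    subst2 f g (bLam r R i X) = f i (subst2 f g X) := by
  suffices h : subst2 f g ∘ₗ bLam r R i = f i ∘ₗ subst2 f g from LinearMap.congr_fun h X
  refine Finsupp.lhom_ext fun e v => ?_
  simp only [LinearMap.comp_apply, bLam, bShift_eq, shiftOp_single, subst2_single, map_add,
    sumFinsuppAddEquivProdFinsupp_single_inl, Prod.fst_add, Prod.snd_add, add_zero,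
    piPow_add_single f fun i j => commute_of_mem_opRing (hf i) (hf j), mul_assoc,
    Module.End.mul_apply]

lemma subst2_bMu (hf : ∀ i, f i ∈ opRing r R _) (hg : ∀ i, g i ∈ opRing r R _) (i : Fin r)
    (X : BP r R) : subst2 f g (bMu r R i X) = g i (subst2 f g X) := by
  suffices h : subst2 f g ∘ₗ bMu r R i = g i ∘ₗ subst2 f g from LinearMap.congr_fun h X
  refine Finsupp.lhom_ext fun e v => ?_
  simp only [LinearMap.comp_apply, bMu, bShift_eq, shiftOp_single, subst2_single, map_add,
    sumFinsuppAddEquivProdFinsupp_single_inr, Prod.fst_add, Prod.snd_add, add_zero,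
    piPow_add_single g fun i j => commute_of_mem_opRing (hg i) (hg j), ← mul_assoc,
    (commute_of_mem_opRing (piPow_mem hf _) (hg i)).eq]
  simp only [mul_assoc, Module.End.mul_apply]

lemma subst2_bT (hf : ∀ i, f i ∈ opRing r R _) (hg : ∀ i, g i ∈ opRing r R _) (i : Fin r)
    (X : BP r R) : subst2 f g (bT r R i X) = bT r R i (subst2 f g X) := by
  suffices h : subst2 f g ∘ₗ bT r R i = bT r R i ∘ₗ subst2 f g from LinearMap.congr_fun h X
  refine Finsupp.lhom_ext fun e v => ?_
  simp only [LinearMap.comp_apply, bT_eq, tOp_single, subst2_single]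
  rw [← tOp_single, ← Module.End.mul_apply, ← Module.End.mul_apply,
    (commute_of_mem_opRing (mul_mem (piPow_mem hf _) (piPow_mem hg _)) (tOp_mem i)).eq]

variable (hf : ∀ i, f i ∈ opRing r R _) (hg : ∀ i, g i ∈ opRing r R _)
include hf hg

omit hg in
lemma subst2_FL (i : Fin r) (X : BP r R) : subst2 f g (FL r R i X) = f i (subst2 f g X) :=
  subst2_bLam hf i X

lemma subst2_FM (i : Fin r) (X : BP r R) : subst2 f g (FM r R i X) = g i (subst2 f g X) :=
  subst2_bMu hf hg i X

lemma subst2_FLM (i : Fin r) (X : BP r R) :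
    subst2 f g (FLM r R i X) = (f i + g i) (subst2 f g X) := by
  simp only [FLM, LinearMap.add_apply, map_add, subst2_bLam hf, subst2_bMu hf hg]

lemma subst2_FNM (i : Fin r) (X : BP r R) :
    subst2 f g (FNM r R i X) = (-(g i) - bT r R i) (subst2 f g X) := by
  simp only [FNM, LinearMap.sub_apply, LinearMap.neg_apply, map_sub, map_neg, subst2_bMu hf hg,
    subst2_bT hf hg]

lemma subst2_FNLM (i : Fin r) (X : BP r R) :
    subst2 f g (FNLM r R i X) = (-(f i) - g i - bT r R i) (subst2 f g X) := by
  simp only [FNLM, LinearMap.sub_apply, LinearMap.neg_apply, map_sub, map_neg, subst2_bLam hf,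
    subst2_bMu hf hg, subst2_bT hf hg]

end Subst2

section Bracket

variable {r : ℕ} {R : Type*} [AddCommGroup R] [Module ℂ R]
  [Module (MvPolynomial (Fin r) ℂ) R] [IsScalarTower ℂ (MvPolynomial (Fin r) ℂ) R]
  {G : ZMod 2 → Submodule ℂ R} {p q : R → R → VP r R}

variable (r) in
def IsTStable (G : ZMod 2 → Submodule ℂ R) : Prop :=
  ∀ (i : Fin r) (α : ZMod 2) (v : R), v ∈ G α → (X i : MvPolynomial (Fin r) ℂ) • v ∈ G α

lemma subst_mem_coeffIn {κ : Type*} [AddCommMonoid κ] (hGX : IsTStable r G)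
    {s : Fin r → Module.End ℂ (κ →₀ R)} (hs : ∀ i, s i ∈ opRing r R κ) {δ : ZMod 2} {F : VP r R}
    (hF : F ∈ coeffIn _ (G δ)) : subst s F ∈ coeffIn κ (G δ) :=
  Submodule.finsuppSum_mem _ _ _ _ fun k _ =>
    opRing_le_endStabilizer (hGX · δ) (piPow_mem hs k) _ (single_mem_coeffIn 0 (hF k))

variable (hdef : ∀ (α β : ZMod 2) (a b : R), a ∈ G α → b ∈ G β →
  q a b = p a b - sgn α β • vNeg r R (p b a))
include hdef

lemma parityPres_bracket (hpar : ParityPres r R G p) (hGX : IsTStable r G) :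
    ParityPres r R G q := by
  intro α β a b ha hb
  have hab : p a b ∈ coeffIn _ (G (α + β)) := hpar α β a b ha hb
  have hba : p b a ∈ coeffIn _ (G (α + β)) := add_comm β α ▸ hpar β α b a hb ha
  show q a b ∈ coeffIn _ (G (α + β))
  rw [hdef α β a b ha hb]
  exact sub_mem hab (zsmul_mem (subst_mem_coeffIn hGX vFNL_mem hba) _)

lemma ev_bracket {s : Fin r → Module.End ℂ (BP r R)} (hs : ∀ i, s i ∈ opRing r R _)
    {α β : ZMod 2} {a b : R} (ha : a ∈ G α) (hb : b ∈ G β) :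
    ev r R s (q a b) =
      ev r R s (p a b) - sgn α β • ev r R (fun i => -(s i) - bT r R i) (p b a) := by
  rw [hdef α β a b ha hb, ← ev_vNeg hs, ev_eq_subst, map_sub, map_zsmul]

lemma evR_bracket {Φ : Fin r → Module.End ℂ (BP r R)} (hΦ : ∀ i, Φ i ∈ opRing r R _)
    {ξ δ : ZMod 2} {x : R} (hx : x ∈ G ξ) {H : BP r R} (hH : H ∈ coeffIn _ (G δ)) :
    evR r R q Φ x H =
      evR r R p Φ x H - sgn ξ δ • evL r R p (fun i => -(Φ i) - bT r R i) H x := by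
  rw [evR, evR, evL, Finsupp.smul_sum, ← Finsupp.sum_sub]
  refine Finsupp.sum_congr fun e _ => ?_
  rw [ev_bracket hdef hΦ hx (hH e), map_sub, map_zsmul]

lemma evL_bracket {Φ : Fin r → Module.End ℂ (BP r R)} (hΦ : ∀ i, Φ i ∈ opRing r R _)
    {δ ζ : ZMod 2} {z : R} (hz : z ∈ G ζ) {H : BP r R} (hH : H ∈ coeffIn _ (G δ)) :
    evL r R q Φ H z =
      evL r R p Φ H z - sgn δ ζ • evR r R p (fun i => -(Φ i) - bT r R i) z H := by
  rw [evL, evL, evR, Finsupp.smul_sum, ← Finsupp.sum_sub]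
  refine Finsupp.sum_congr fun e _ => ?_
  rw [ev_bracket hdef hΦ (hH e) hz, map_sub, map_zsmul]

end Bracket

section Expansion

variable {r : ℕ} {R : Type*} [AddCommGroup R] [Module ℂ R]
  [Module (MvPolynomial (Fin r) ℂ) R] [IsScalarTower ℂ (MvPolynomial (Fin r) ℂ) R]
  {G : ZMod 2 → Submodule ℂ R} {p q : R → R → VP r R}
  (hdef : ∀ (α β : ZMod 2) (a b : R), a ∈ G α → b ∈ G β →
    q a b = p a b - sgn α β • vNeg r R (p b a))
  (hp : Bilin r R p) (hses : Sesq r R p) (hq : ParityPres r R G q)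
  (hGX : IsTStable r G)
  {α β γ : ZMod 2} {a b c : R} (ha : a ∈ G α) (hb : b ∈ G β) (hc : c ∈ G γ)
include hdef hp hses hq hGX ha hb hc

lemma expand_a_bc :
    evR r R q (FL r R) a (ev r R (FM r R) (q b c)) =
      (cR p (FM r R) (FL r R) a b c - sgn β γ • cR p (FNLM r R) (FL r R) a c b) -
      sgn α (β + γ) •
        (cL p (FM r R) (FNL r R) b c a - sgn β γ • cL p (FNLM r R) (FNL r R) c b a) := by
  rw [evR_bracket hdef FL_mem ha (H := ev r R (FM r R) (q b c))
      (subst_mem_coeffIn hGX FM_mem (hq β γ b c hb hc)),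
    ev_bracket hdef FM_mem hb hc]
  simp only [← evRHom_apply hp, ← evLHom_apply hp, map_sub, map_zsmul]
  simp only [evRHom_apply, evLHom_apply]
  rw [neg_FL_sub_bT, neg_FM_sub_bT,
    evR_ev hp _ (FM r R) (FM r R) (fun i X => evR_bShift hp (FL r R) a _ X),
    evR_ev hp _ (FNM r R) (fun i => FNM r R i - FL r R i)
      (fun i X => evR_neg_bShift_sub_bT hp hses FL_mem a _ i X), FNM_sub_FL,
    evL_ev hp _ (FM r R) (FM r R) (fun i X => evL_bShift hp (FNL r R) _ X a),
    evL_ev hp _ (FNM r R) (fun i => FNL r R i - FM r R i)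
      (fun i X => evL_neg_bShift_sub_bT hp hses FNL_mem _ i X a), FNL_sub_FM]

lemma expand_ab_c :
    evL r R q (FLM r R) (ev r R (FL r R) (q a b)) c =
      (cL p (FL r R) (FLM r R) a b c - sgn α β • cL p (FM r R) (FLM r R) b a c) -
      sgn (α + β) γ •
        (cR p (FL r R) (FNLM r R) c a b - sgn α β • cR p (FM r R) (FNLM r R) c b a) := by
  rw [evL_bracket hdef FLM_mem hc (H := ev r R (FL r R) (q a b))
      (subst_mem_coeffIn hGX FL_mem (hq α β a b ha hb)),
    ev_bracket hdef FL_mem ha hb]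
  simp only [← evRHom_apply hp, ← evLHom_apply hp, map_sub, map_zsmul]
  simp only [evRHom_apply, evLHom_apply]
  rw [neg_FLM_sub_bT, neg_FL_sub_bT,
    evL_ev hp _ (FL r R) (FL r R) (fun i X => evL_bShift hp (FLM r R) _ X c),
    evL_ev hp _ (FNL r R) (fun i => FLM r R i - FL r R i)
      (fun i X => evL_neg_bShift_sub_bT hp hses FLM_mem _ i X c), FLM_sub_FL,
    evR_ev hp _ (FL r R) (FL r R) (fun i X => evR_bShift hp (FNLM r R) c _ X),
    evR_ev hp _ (FNL r R) (fun i => FNL r R i - FNLM r R i)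
      (fun i X => evR_neg_bShift_sub_bT hp hses FNLM_mem c _ i X), FNL_sub_FNLM]

lemma expand_b_ac :
    evR r R q (FM r R) b (ev r R (FL r R) (q a c)) =
      (cR p (FL r R) (FM r R) b a c - sgn α γ • cR p (FNLM r R) (FM r R) b c a) -
      sgn β (α + γ) •
        (cL p (FL r R) (FNM r R) a c b - sgn α γ • cL p (FNLM r R) (FNM r R) c a b) := by
  rw [evR_bracket hdef FM_mem hb (H := ev r R (FL r R) (q a c))
      (subst_mem_coeffIn hGX FL_mem (hq α γ a c ha hc)),
    ev_bracket hdef FL_mem ha hc]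
  simp only [← evRHom_apply hp, ← evLHom_apply hp, map_sub, map_zsmul]
  simp only [evRHom_apply, evLHom_apply]
  rw [neg_FM_sub_bT, neg_FL_sub_bT,
    evR_ev hp _ (FL r R) (FL r R) (fun i X => evR_bShift hp (FM r R) b _ X),
    evR_ev hp _ (FNL r R) (fun i => FNL r R i - FM r R i)
      (fun i X => evR_neg_bShift_sub_bT hp hses FM_mem b _ i X), FNL_sub_FM,
    evL_ev hp _ (FL r R) (FL r R) (fun i X => evL_bShift hp (FNM r R) _ X b),
    evL_ev hp _ (FNL r R) (fun i => FNM r R i - FL r R i)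
      (fun i X => evL_neg_bShift_sub_bT hp hses FNM_mem _ i X b), FNM_sub_FL]

end Expansion

section Novikov

variable {r : ℕ} {R : Type*} [AddCommGroup R] [Module ℂ R]
  [Module (MvPolynomial (Fin r) ℂ) R] [IsScalarTower ℂ (MvPolynomial (Fin r) ℂ) R]
  {G : ZMod 2 → Submodule ℂ R} {p : R → R → VP r R} {α β γ : ZMod 2} {a b c : R}

omit [Module (MvPolynomial (Fin r) ℂ) R] [IsScalarTower ℂ (MvPolynomial (Fin r) ℂ) R] in
lemma novLeft1_canonical (hp : Bilin r R p) (hN : NovLeft1 r R G p) (ha : a ∈ G α)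
    (hb : b ∈ G β) (c : R) :
    cL p (FL r R) (FLM r R) a b c - cR p (FM r R) (FL r R) a b c =
      sgn α β • (cL p (FM r R) (FLM r R) b a c - cR p (FL r R) (FM r R) b a c) := by
  have h := hN α β a b c ha hb
  rwa [evL_ev hp (FLM r R) (FL r R) (FL r R) (fun i X => evL_bShift hp _ _ X c),
    evR_ev hp (FL r R) (FM r R) (FM r R) (fun i X => evR_bShift hp _ a _ X),
    evL_ev hp (FLM r R) (FM r R) (FM r R) (fun i X => evL_bShift hp _ _ X c),
    evR_ev hp (FM r R) (FL r R) (FL r R) (fun i X => evR_bShift hp _ b _ X)] at h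

lemma novLeft1_subst (hp : Bilin r R p) (hN : NovLeft1 r R G p)
    {f g : Fin r → Module.End ℂ (BP r R)} (hf : ∀ i, f i ∈ opRing r R _)
    (hg : ∀ i, g i ∈ opRing r R _) (ha : a ∈ G α) (hb : b ∈ G β) (c : R) :
    cL p f (fun i => f i + g i) a b c - cR p g f a b c =
      sgn α β • (cL p g (fun i => f i + g i) b a c - cR p f g b a c) := by
  have h := congrArg (subst2 f g) (novLeft1_canonical hp hN ha hb c)
  rwa [map_sub, map_zsmul, map_sub, subst2_cL p (subst2_FL hf) (subst2_FLM hf hg),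
    subst2_cR p (subst2_FM hf hg) (subst2_FL hf), subst2_cL p (subst2_FM hf hg)
    (subst2_FLM hf hg), subst2_cR p (subst2_FL hf) (subst2_FM hf hg)] at h

lemma novRight1_canonical (hp : Bilin r R p) (hses : Sesq r R p) (hN : NovRight1 r R G p)
    (a : R) (hb : b ∈ G β) (hc : c ∈ G γ) :
    cR p (FM r R) (FL r R) a b c - cL p (FL r R) (FLM r R) a b c =
      sgn β γ • (cR p (FNLM r R) (FL r R) a c b - cL p (FL r R) (FNM r R) a c b) := by
  have h := hN β γ a b c hb hc
  rwa [evR_ev hp (FL r R) (FM r R) (FM r R) (fun i X => evR_bShift hp _ a _ X),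
    evL_ev hp (FLM r R) (FL r R) (FL r R) (fun i X => evL_bShift hp _ _ X c),
    evR_ev hp (FL r R) (FNM r R) (fun i => FNM r R i - FL r R i)
      (fun i X => evR_neg_bShift_sub_bT hp hses FL_mem a _ i X), FNM_sub_FL,
    evL_ev hp (FNM r R) (FL r R) (FL r R) (fun i X => evL_bShift hp _ _ X b)] at h

lemma novRight1_subst (hp : Bilin r R p) (hses : Sesq r R p) (hN : NovRight1 r R G p)
    {f g : Fin r → Module.End ℂ (BP r R)} (hf : ∀ i, f i ∈ opRing r R _)
    (hg : ∀ i, g i ∈ opRing r R _) (a : R) (hb : b ∈ G β) (hc : c ∈ G γ) :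
    cR p g f a b c - cL p f (fun i => f i + g i) a b c =
      sgn β γ • (cR p (fun i => -(f i) - g i - bT r R i) f a c b -
        cL p f (fun i => -(g i) - bT r R i) a c b) := by
  have h := congrArg (subst2 f g) (novRight1_canonical hp hses hN a hb hc)
  rwa [map_sub, map_zsmul, map_sub, subst2_cR p (subst2_FM hf hg) (subst2_FL hf),
    subst2_cL p (subst2_FL hf) (subst2_FLM hf hg), subst2_cR p (subst2_FNLM hf hg)
    (subst2_FL hf), subst2_cL p (subst2_FL hf) (subst2_FNM hf hg)] at h

end Novikov

section Signs

lemma sgn_comm (α β : ZMod 2) : sgn α β = sgn β α := by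
  revert α β; decide

lemma sgn_mul_self (α β : ZMod 2) : sgn α β * sgn α β = 1 := by
  revert α β; decide

lemma sgn_add_right (α β γ : ZMod 2) : sgn α (β + γ) = sgn α β * sgn α γ := by
  revert α β γ; decide

lemma sgn_add_left (α β γ : ZMod 2) : sgn (α + β) γ = sgn α γ * sgn β γ := by
  revert α β γ; decide

end Signs

section Combination

variable {M : Type*} [AddCommGroup M] {u v w : ℤ} {t₁ t₂ t₃ t₄ t₅ t₆ t₇ t₈ t₉ t₁₀ t₁₁ t₁₂ : M}

lemma jacobi_combination_of_left (hu : u * u = 1) (hv : v * v = 1) (hw : w * w = 1)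
    (h₀ : t₅ - t₁ = u • (t₆ - t₉)) (h₁ : t₁₂ - t₇ = v • (t₁₁ - t₂))
    (h₂ : t₄ - t₈ = w • (t₃ - t₁₀)) :
    (t₁ - w • t₂) - (u * v) • (t₃ - w • t₄) =
      (t₅ - u • t₆) - (v * w) • (t₇ - u • t₈) +
        u • ((t₉ - v • t₁₀) - (u * w) • (t₁₁ - v • t₁₂)) := by
  linear_combination (norm := module) -h₀ - (v * w) • h₁ + (u * v * w) • h₂ +
    hv • (w • t₂ - w • t₁₁) + hw • ((u * v) • (t₃ - t₁₀)) + hu • (w • t₁₁ - (v * w) • t₁₂)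

lemma jacobi_combination_of_right (hu : u * u = 1)
    (h₀ : t₁ - t₅ = w • (t₂ - t₁₁)) (h₁ : t₉ - t₆ = v • (t₁₀ - t₃))
    (h₂ : t₇ - t₁₂ = u • (t₈ - t₄)) :
    (t₁ - w • t₂) - (u * v) • (t₃ - w • t₄) =
      (t₅ - u • t₆) - (v * w) • (t₇ - u • t₈) +
        u • ((t₉ - v • t₁₀) - (u * w) • (t₁₁ - v • t₁₂)) := by
  linear_combination (norm := module) h₀ - u • h₁ + (v * w) • h₂ + hu • (w • t₁₁ - (v * w) • t₁₂)

end Combination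

section Jacobi

variable {r : ℕ} {R : Type*} [AddCommGroup R] [Module ℂ R]
  [Module (MvPolynomial (Fin r) ℂ) R] [IsScalarTower ℂ (MvPolynomial (Fin r) ℂ) R]
  {G : ZMod 2 → Submodule ℂ R} {p q : R → R → VP r R}
  (hdef : ∀ (α β : ZMod 2) (a b : R), a ∈ G α → b ∈ G β →
    q a b = p a b - sgn α β • vNeg r R (p b a))
  (hp : Bilin r R p) (hses : Sesq r R p) (hq : ParityPres r R G q)
  (hGX : IsTStable r G)
  {α β γ : ZMod 2} {a b c : R} (ha : a ∈ G α) (hb : b ∈ G β) (hc : c ∈ G γ)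
include hdef hp hses hq hGX ha hb hc

lemma jacobi_bracket_of_novLeft1 (hN : NovLeft1 r R G p) :
    evR r R q (FL r R) a (ev r R (FM r R) (q b c)) =
      evL r R q (FLM r R) (ev r R (FL r R) (q a b)) c +
      sgn α β • evR r R q (FM r R) b (ev r R (FL r R) (q a c)) := by
  have h₁ := novLeft1_subst hp hN FNLM_mem FL_mem hc ha b
  have h₂ := novLeft1_subst hp hN FNLM_mem FM_mem hc hb a
  rw [FNLM_add_FL, sgn_comm] at h₁
  rw [FNLM_add_FM, sgn_comm] at h₂
  rw [expand_a_bc hdef hp hses hq hGX ha hb hc, expand_ab_c hdef hp hses hq hGX ha hb hc,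
    expand_b_ac hdef hp hses hq hGX ha hb hc, sgn_add_right, sgn_add_left, sgn_add_right β,
    sgn_comm β α]
  exact jacobi_combination_of_left (sgn_mul_self α β) (sgn_mul_self α γ) (sgn_mul_self β γ)
    (novLeft1_canonical hp hN ha hb c) h₁ h₂

lemma jacobi_bracket_of_novRight1 (hN : NovRight1 r R G p) :
    evR r R q (FL r R) a (ev r R (FM r R) (q b c)) =
      evL r R q (FLM r R) (ev r R (FL r R) (q a b)) c +
      sgn α β • evR r R q (FM r R) b (ev r R (FL r R) (q a c)) := by
  have h₁ := novRight1_subst hp hses hN FM_mem FL_mem b ha hc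
  have h₂ := novRight1_subst hp hses hN FNLM_mem FL_mem c ha hb
  rw [FM_add_FL, neg_FM_sub_FL_sub_bT, neg_FL_sub_bT] at h₁
  rw [FNLM_add_FL, neg_FNLM_sub_FL_sub_bT, neg_FL_sub_bT] at h₂
  rw [expand_a_bc hdef hp hses hq hGX ha hb hc, expand_ab_c hdef hp hses hq hGX ha hb hc,
    expand_b_ac hdef hp hses hq hGX ha hb hc, sgn_add_right, sgn_add_left, sgn_add_right β,
    sgn_comm β α]
  exact jacobi_combination_of_right (sgn_mul_self α β)
    (novRight1_canonical hp hses hN a hb hc) h₁ h₂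

end Jacobi

lemma forall_of_forall_homogeneous {S : Type*} [AddCommGroup S] [Module ℂ S]
    {G : ZMod 2 → Submodule ℂ S} (hG : DirectSum.IsInternal G) {P : S → Prop} (h0 : P 0)
    (hadd : ∀ x y, P x → P y → P (x + y)) (hhom : ∀ α, ∀ x ∈ G α, P x) (x : S) : P x :=
  Submodule.iSup_induction G (motive := P) (hG.submodule_iSup_eq_top ▸ Submodule.mem_top)
    hhom h0 hadd

section LieAxioms

variable {r : ℕ} {R : Type*} [AddCommGroup R] [Module ℂ R]
  [Module (MvPolynomial (Fin r) ℂ) R] [IsScalarTower ℂ (MvPolynomial (Fin r) ℂ) R]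
  {G : ZMod 2 → Submodule ℂ R} {p q : R → R → VP r R}

variable (hdef : ∀ (α β : ZMod 2) (a b : R), a ∈ G α → b ∈ G β →
  q a b = p a b - sgn α β • vNeg r R (p b a))
include hdef

lemma skew_bracket : Skew r R G q := by
  intro α β a b ha hb
  rw [hdef α β a b ha hb, hdef β α b a hb ha, vNeg_eq_subst, map_sub, map_zsmul,
    ← vNeg_eq_subst, vNeg_vNeg, sgn_comm β α, smul_sub, smul_smul, sgn_mul_self, one_smul]
  abel

lemma sesq_bracket_of_mem (hses : Sesq r R p) (hGX : IsTStable r G) (i : Fin r) {α β : ZMod 2}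
    {a b : R} (ha : a ∈ G α) (hb : b ∈ G β) :
    q ((X i : MvPolynomial (Fin r) ℂ) • a) b = (-(vLam r R i)) (q a b) ∧
      q a ((X i : MvPolynomial (Fin r) ℂ) • b) = (vT r R i + vLam r R i) (q a b) := by
  constructor
  · rw [hdef α β _ b (hGX i α a ha) hb, hdef α β a b ha hb, (hses i a b).1, (hses i b a).2]
    simp only [LinearMap.add_apply, LinearMap.neg_apply, vNeg_eq_subst, map_add, map_sub,
      map_zsmul, subst_vLam vFNL_mem, subst_vT vFNL_mem, vFNL, LinearMap.sub_apply, ← vT_eq]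
    module
  · rw [hdef α β a _ ha (hGX i β b hb), hdef α β a b ha hb, (hses i a b).2, (hses i b a).1]
    simp only [LinearMap.add_apply, LinearMap.neg_apply, vNeg_eq_subst, map_sub, map_neg,
      map_zsmul, subst_vLam vFNL_mem, vFNL, LinearMap.sub_apply]
    module

lemma sesq_bracket (hG : IsGraded r R G) (hq : Bilin r R q) (hses : Sesq r R p) :
    Sesq r R q := by
  intro i a b
  refine forall_of_forall_homogeneous hG.1
    (P := fun a => ∀ b, q ((X i : MvPolynomial (Fin r) ℂ) • a) b = (-(vLam r R i)) (q a b) ∧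
      q a ((X i : MvPolynomial (Fin r) ℂ) • b) = (vT r R i + vLam r R i) (q a b))
    (fun b => ?_) (fun a a' ha ha' b => ?_) (fun α a ha b => ?_) a b
  · simp only [smul_zero, hq.zero_left, map_zero, and_self]
  · obtain ⟨h₁, h₂⟩ := ha b
    obtain ⟨h₁', h₂'⟩ := ha' b
    rw [smul_add, hq.1, hq.1, hq.1, h₁, h₁', h₂, h₂', map_add, map_add]
    exact ⟨rfl, rfl⟩
  refine forall_of_forall_homogeneous hG.1 ?_ (fun b b' hb hb' => ?_)
    (fun β b hb => sesq_bracket_of_mem hdef hses hG.2 i ha hb) b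
  · simp only [smul_zero, hq.zero_right, map_zero, and_self]
  · rw [smul_add, hq.2.1, hq.2.1, hq.2.1, hb.1, hb'.1, hb.2, hb'.2, map_add, map_add]
    exact ⟨rfl, rfl⟩

end LieAxioms

section JacobiExtension

variable {r : ℕ} {R : Type*} [AddCommGroup R] [Module ℂ R] {G : ZMod 2 → Submodule ℂ R}
  {q : R → R → VP r R}

lemma evL_add_right (hq : Bilin r R q) (s : Fin r → Module.End ℂ (BP r R)) (F : BP r R)
    (c c' : R) : evL r R q s F (c + c') = evL r R q s F c + evL r R q s F c' := by
  simp only [evL, hq.2.1, ev_eq_subst, map_add, Finsupp.sum_add]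

lemma evL_zero_right (hq : Bilin r R q) (s : Fin r → Module.End ℂ (BP r R)) (F : BP r R) :
    evL r R q s F 0 = 0 := by
  simp [evL, hq.zero_right, ev_eq_subst]

lemma jacobi_of_homogeneous (hG : DirectSum.IsInternal G) (hq : Bilin r R q)
    (h : ∀ (α β γ : ZMod 2) (a b c : R), a ∈ G α → b ∈ G β → c ∈ G γ →
      evR r R q (FL r R) a (ev r R (FM r R) (q b c)) =
        evL r R q (FLM r R) (ev r R (FL r R) (q a b)) c +
        sgn α β • evR r R q (FM r R) b (ev r R (FL r R) (q a c))) :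
    Jacobi r R G q := by
  intro α β a b c ha hb
  refine forall_of_forall_homogeneous hG ?_ (fun c c' hc hc' => ?_)
    (fun γ c hc => h α β γ a b c ha hb hc) c
  · simp only [hq.zero_right, ev_eq_subst, map_zero, ← evRHom_apply hq,
      evL_zero_right hq, smul_zero, add_zero]
  · simp only [hq.2.1, ev_eq_subst, map_add, ← evRHom_apply hq] at hc hc' ⊢
    simp only [evL_add_right hq, hc, hc', smul_add]
    abel

end JacobiExtension

end

/-- If `(R, ·_λ·)` is an `r`-dimensional left (respectively, right) Novikov
conformal superalgebra, then `R` with the `λ`-bracket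
`[a_λ b] = a_λ b − (−1)^{αβ} (b_{−λ−T} a)` (for homogeneous `a, b`) is an `r`-dimensional
Lie conformal superalgebra. -/
theorem statement_2 (r : ℕ) (R : Type*) [AddCommGroup R] [Module ℂ R]
    [Module (MvPolynomial (Fin r) ℂ) R] [IsScalarTower ℂ (MvPolynomial (Fin r) ℂ) R]
    (G : ZMod 2 → Submodule ℂ R) (hG : IsGraded r R G)
    (p : R → R → VP r R)
    (hp : IsNovLeft r R G p ∨ IsNovRight r R G p)
    (q : R → R → VP r R) (hq : Bilin r R q)
    (hdef : ∀ (α β : ZMod 2) (a b : R), a ∈ G α → b ∈ G β →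
      q a b = p a b - sgn α β • vNeg r R (p b a)) :
    IsLieConfSuper r R G q := by
  obtain ⟨hbil, hpar, hses⟩ : Bilin r R p ∧ ParityPres r R G p ∧ Sesq r R p :=
    hp.elim (fun h => ⟨h.1, h.2.1, h.2.2.1⟩) (fun h => ⟨h.1, h.2.1, h.2.2.1⟩)
  have hqpar := parityPres_bracket hdef hpar hG.2
  refine ⟨hq, hqpar, sesq_bracket hdef hG hq hses, skew_bracket hdef,
    jacobi_of_homogeneous hG.1 hq fun α β γ a b c ha hb hc => ?_⟩
  rcases hp with hl | hr
  · exact jacobi_bracket_of_novLeft1 hdef hbil hses hqpar hG.2 ha hb hc hl.2.2.2.1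
  · exact jacobi_bracket_of_novRight1 hdef hbil hses hqpar hG.2 ha hb hc hr.2.2.2.1

end CA
end

section
/- Let (V, [·,·], ∘) be a Gel'fand-Dorfman bialgebra. Then A = V ⊗ ℂ[t, t⁻¹] is a Gel'fand-Dorfman bialgebra with Novikov operation (a ⊗ t^m) ∗ (b ⊗ t^n) = (a ∘ b) ⊗ t^{m+n} and Lie bracket [a ⊗ t^m, b ⊗ t^n] = (m(a ∘ b) − n(b ∘ a)) ⊗ t^{m+n−1} + [b, a] ⊗ t^{m+n}, for a, b ∈ V and m, n ∈ ℤ. -/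
open Finsupp MvPolynomial
open scoped TensorProduct

namespace Finsupp

section

variable {R α β M N W : Type*} [CommSemiring R] [AddCommMonoid M] [AddCommMonoid N]
  [AddCommMonoid W] [Module R M] [Module R N] [Module R W]

noncomputable def lsum₂ (Φ : α → β → M →ₗ[R] N →ₗ[R] W) : (α →₀ M) →ₗ[R] (β →₀ N) →ₗ[R] W :=
  lsum R fun i => (lsum R fun j => (Φ i j).flip).flip

theorem lsum₂_apply (Φ : α → β → M →ₗ[R] N →ₗ[R] W) (F : α →₀ M) (G : β →₀ N) :
    lsum₂ Φ F G = F.sum fun i a => G.sum fun j b => Φ i j a b := by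
  simp [lsum₂, lsum_apply, Finset.sum_apply, Finsupp.sum]

@[simp]
theorem lsum₂_single (Φ : α → β → M →ₗ[R] N →ₗ[R] W) (i : α) (a : M) (j : β) (b : N) :
    lsum₂ Φ (single i a) (single j b) = Φ i j a b := by
  simp [lsum₂]

end

theorem eq_zero_of_map_add_of_single {α M N : Type*} [AddZeroClass M] [AddGroup N]
    {T : (α →₀ M) → N} (hadd : ∀ F F', T (F + F') = T F + T F')
    (hsingle : ∀ i a, T (single i a) = 0) (F : α →₀ M) : T F = 0 :=
  DFunLike.congr_fun (addHom_ext (f := AddMonoidHom.mk' T hadd) (g := 0) hsingle) F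

theorem eq_zero_of_map_add₃_of_single {α M N : Type*} [AddZeroClass M] [AddGroup N]
    {T : (α →₀ M) → (α →₀ M) → (α →₀ M) → N}
    (hsingle : ∀ i j k a b c, T (single i a) (single j b) (single k c) = 0)
    (h₁ : ∀ F F' G H, T (F + F') G H = T F G H + T F' G H)
    (h₂ : ∀ F G G' H, T F (G + G') H = T F G H + T F G' H)
    (h₃ : ∀ F G H H', T F G (H + H') = T F G H + T F G H')
    (F G H : α →₀ M) : T F G H = 0 :=
  eq_zero_of_map_add_of_single (T := (T · G H)) (h₁ · · G H) (fun i a =>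
    eq_zero_of_map_add_of_single (T := (T _ · H)) (h₂ _ · · H) (fun j b =>
      eq_zero_of_map_add_of_single (h₃ _ _) (hsingle i j · a b) H) G) F

end Finsupp

namespace CA

section Bilinear

variable {E : Type*} [AddCommGroup E] [Module ℂ E]

theorem bilinV_of_linearMap (B : E →ₗ[ℂ] E →ₗ[ℂ] E) : BilinV E (B · ·) :=
  ⟨fun _ _ _ => by simp, fun _ _ _ => by simp, fun _ _ _ => by simp, fun _ _ _ => by simp⟩

theorem BilinV.exists_linearMap₂ {m : E → E → E} (h : BilinV E m) :
    ∃ B : E →ₗ[ℂ] E →ₗ[ℂ] E, m = (B · ·) :=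
  ⟨LinearMap.mk₂ ℂ m h.1 h.2.2.1 h.2.1 h.2.2.2, rfl⟩

theorem isGD_of_linearMap (L N : E →ₗ[ℂ] E →ₗ[ℂ] E)
    (skew : ∀ a b, L a b = -L b a) (jacobi : ∀ a b c, L a (L b c) = L (L a b) c + L b (L a c))
    (right_comm : ∀ a b c, N (N a b) c = N (N a c) b)
    (left_symm : ∀ a b c, N (N a b) c - N a (N b c) = N (N b a) c - N b (N a c))
    (compat : ∀ a b c, L (N a b) c + N (L a b) c - N a (L b c) - L (N a c) b - N (L a c) b = 0) :
    IsGD E (L · ·) (N · ·) :=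
  ⟨⟨bilinV_of_linearMap L, skew, jacobi⟩, ⟨bilinV_of_linearMap N, right_comm, left_symm⟩, compat⟩

end Bilinear

section Loop

variable {V : Type*} [AddCommGroup V] [Module ℂ V] (L N : V →ₗ[ℂ] V →ₗ[ℂ] V)

noncomputable def loopNov : (ℤ →₀ V) →ₗ[ℂ] (ℤ →₀ V) →ₗ[ℂ] (ℤ →₀ V) :=
  lsum₂ fun m n => N.compr₂ (lsingle (m + n))

noncomputable def loopBracket : (ℤ →₀ V) →ₗ[ℂ] (ℤ →₀ V) →ₗ[ℂ] (ℤ →₀ V) :=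
  lsum₂ fun m n => m • N.compr₂ (lsingle (m + n - 1)) - n • N.flip.compr₂ (lsingle (m + n - 1)) +
    L.flip.compr₂ (lsingle (m + n))

theorem loopNov_apply (F G : ℤ →₀ V) :
    loopNov N F G = F.sum fun m a => G.sum fun n b => single (m + n) (N a b) := by
  simp [loopNov, lsum₂_apply]

theorem loopBracket_apply (F G : ℤ →₀ V) :
    loopBracket L N F G = F.sum fun m a => G.sum fun n b =>
      m • single (m + n - 1) (N a b) - n • single (m + n - 1) (N b a) + single (m + n) (L b a) := by
  simp [loopBracket, lsum₂_apply]

@[simp]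
theorem loopNov_single (m n : ℤ) (a b : V) :
    loopNov N (single m a) (single n b) = single (m + n) (N a b) := by
  simp [loopNov]

@[simp]
theorem loopBracket_single (m n : ℤ) (a b : V) :
    loopBracket L N (single m a) (single n b) =
      m • single (m + n - 1) (N a b) - n • single (m + n - 1) (N b a) + single (m + n) (L b a) := by
  simp [loopBracket]

variable {L N}

theorem loopBracket_skew (skew : ∀ a b, L a b = -L b a) (F G : ℤ →₀ V) :
    loopBracket L N F G = -loopBracket L N G F := by
  suffices loopBracket L N = -(loopBracket L N).flip from LinearMap.congr_fun₂ this F G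
  ext m a n b : 4
  simp only [LinearMap.coe_comp, Function.comp_apply, lsingle_apply, loopBracket_single,
    LinearMap.neg_apply, LinearMap.flip_apply, add_comm n m, skew a b, single_neg]
  abel

theorem loopNov_right_comm (right_comm : ∀ a b c, N (N a b) c = N (N a c) b) (F G H : ℤ →₀ V) :
    loopNov N (loopNov N F G) H = loopNov N (loopNov N F H) G := by
  rw [← sub_eq_zero]
  refine eq_zero_of_map_add₃_of_single
    (T := fun F G H => loopNov N (loopNov N F G) H - loopNov N (loopNov N F H) G)
    (fun m n p a b c => ?_) ?_ ?_ ?_ F G H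
  · simp [right_comm a b c, add_right_comm m n p]
  all_goals intros; simp only [map_add, LinearMap.add_apply]; abel

theorem loopNov_left_symm
    (left_symm : ∀ a b c, N (N a b) c - N a (N b c) = N (N b a) c - N b (N a c))
    (F G H : ℤ →₀ V) :
    loopNov N (loopNov N F G) H - loopNov N F (loopNov N G H) =
      loopNov N (loopNov N G F) H - loopNov N G (loopNov N F H) := by
  rw [← sub_eq_zero]
  refine eq_zero_of_map_add₃_of_single
    (T := fun F G H => loopNov N (loopNov N F G) H - loopNov N F (loopNov N G H) -
      (loopNov N (loopNov N G F) H - loopNov N G (loopNov N F H)))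
    (fun m n p a b c => ?_) ?_ ?_ ?_ F G H
  · simp only [loopNov_single, ← add_assoc, add_comm n m, ← single_sub, left_symm a b c, sub_self]
  all_goals intros; simp only [map_add, LinearMap.add_apply]; abel

theorem loopBracket_jacobi_single (skew : ∀ a b, L a b = -L b a)
    (jacobi : ∀ a b c, L a (L b c) = L (L a b) c + L b (L a c))
    (right_comm : ∀ a b c, N (N a b) c = N (N a c) b)
    (left_symm : ∀ a b c, N (N a b) c - N a (N b c) = N (N b a) c - N b (N a c))
    (compat : ∀ a b c, L (N a b) c + N (L a b) c - N a (L b c) - L (N a c) b - N (L a c) b = 0)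
    (m n p : ℤ) (a b c : V) :
    loopBracket L N (single m a) (loopBracket L N (single n b) (single p c)) -
      loopBracket L N (loopBracket L N (single m a) (single n b)) (single p c) -
      loopBracket L N (single n b) (loopBracket L N (single m a) (single p c)) = 0 := by
  ext j
  simp only [loopBracket_single, map_add, map_sub, map_zsmul, LinearMap.add_apply,
    LinearMap.sub_apply, LinearMap.smul_apply, Finsupp.coe_add, Finsupp.coe_sub, Finsupp.coe_smul,
    Pi.add_apply, Pi.sub_apply, Pi.smul_apply, single_apply, Finsupp.coe_zero, Pi.zero_apply]
  obtain rfl | rfl | rfl | ⟨h₂, h₁, h₀⟩ : j = m + n + p - 2 ∨ j = m + n + p - 1 ∨ j = m + n + p ∨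
      (j ≠ m + n + p - 2 ∧ j ≠ m + n + p - 1 ∧ j ≠ m + n + p) := by omega
  · simp (disch := omega) only [if_pos, if_neg]
    linear_combination (norm := module) (m - m ^ 2) • right_comm a b c +
      (n ^ 2 - n) • right_comm b a c + (p - p ^ 2) • right_comm c a b -
      (m * n) • left_symm a b c + (m * p) • left_symm a c b + (n * p) • left_symm c b a
  · simp (disch := omega) only [if_pos, if_neg, ite_true]
    have hb := compat b c a
    have hc := compat c b a
    -- `module` treats `L c b` and `L b c` as unrelated atoms, so orient the inner brackets first.
    simp only [skew c b, skew b a, skew c a, map_neg, LinearMap.neg_apply] at hb hc ⊢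
    linear_combination (norm := module) m • compat a b c + n • hb - p • hc -
      m • skew c (N a b) + n • skew c (N b a)
  · simp (disch := omega) only [if_pos, if_neg, ite_true]
    linear_combination (norm := module) -jacobi c b a - skew b (L c a)
  · simp (disch := omega) only [if_neg]
    simp

theorem loopBracket_loopNov_compat_single (skew : ∀ a b, L a b = -L b a)
    (right_comm : ∀ a b c, N (N a b) c = N (N a c) b)
    (left_symm : ∀ a b c, N (N a b) c - N a (N b c) = N (N b a) c - N b (N a c))
    (compat : ∀ a b c, L (N a b) c + N (L a b) c - N a (L b c) - L (N a c) b - N (L a c) b = 0)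
    (m n p : ℤ) (a b c : V) :
    loopBracket L N (loopNov N (single m a) (single n b)) (single p c) +
      loopNov N (loopBracket L N (single m a) (single n b)) (single p c) -
      loopNov N (single m a) (loopBracket L N (single n b) (single p c)) -
      loopBracket L N (loopNov N (single m a) (single p c)) (single n b) -
      loopNov N (loopBracket L N (single m a) (single p c)) (single n b) = 0 := by
  ext j
  simp only [loopBracket_single, loopNov_single, map_add, map_sub, map_zsmul, LinearMap.add_apply,
    LinearMap.sub_apply, LinearMap.smul_apply, Finsupp.coe_add, Finsupp.coe_sub, Finsupp.coe_smul,
    Pi.add_apply, Pi.sub_apply, Pi.smul_apply, single_apply, Finsupp.coe_zero, Pi.zero_apply]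
  obtain rfl | rfl | ⟨h₁, h₀⟩ : j = m + n + p - 1 ∨ j = m + n + p ∨
      (j ≠ m + n + p - 1 ∧ j ≠ m + n + p) := by omega
  · simp (disch := omega) only [if_pos, if_neg, ite_true]
    linear_combination (norm := module) (2 * m) • right_comm a b c + n • left_symm a b c -
      p • left_symm a c b
  · simp (disch := omega) only [if_pos, if_neg, ite_true]
    simp only [skew b a, skew c b, skew c a, map_neg, LinearMap.neg_apply]
    linear_combination (norm := module) -compat a b c + skew c (N a b) - skew b (N a c)
  · simp (disch := omega) only [if_neg]
    simp

theorem loopBracket_jacobi (skew : ∀ a b, L a b = -L b a)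
    (jacobi : ∀ a b c, L a (L b c) = L (L a b) c + L b (L a c))
    (right_comm : ∀ a b c, N (N a b) c = N (N a c) b)
    (left_symm : ∀ a b c, N (N a b) c - N a (N b c) = N (N b a) c - N b (N a c))
    (compat : ∀ a b c, L (N a b) c + N (L a b) c - N a (L b c) - L (N a c) b - N (L a c) b = 0)
    (F G H : ℤ →₀ V) :
    loopBracket L N F (loopBracket L N G H) =
      loopBracket L N (loopBracket L N F G) H + loopBracket L N G (loopBracket L N F H) := by
  rw [← sub_eq_zero, ← sub_sub]
  refine eq_zero_of_map_add₃_of_single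
    (T := fun F G H => loopBracket L N F (loopBracket L N G H) -
      loopBracket L N (loopBracket L N F G) H - loopBracket L N G (loopBracket L N F H))
    (loopBracket_jacobi_single skew jacobi right_comm left_symm compat) ?_ ?_ ?_ F G H
  all_goals intros; simp only [map_add, LinearMap.add_apply]; abel

theorem loopBracket_loopNov_compat (skew : ∀ a b, L a b = -L b a)
    (right_comm : ∀ a b c, N (N a b) c = N (N a c) b)
    (left_symm : ∀ a b c, N (N a b) c - N a (N b c) = N (N b a) c - N b (N a c))
    (compat : ∀ a b c, L (N a b) c + N (L a b) c - N a (L b c) - L (N a c) b - N (L a c) b = 0)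
    (F G H : ℤ →₀ V) :
    loopBracket L N (loopNov N F G) H + loopNov N (loopBracket L N F G) H -
      loopNov N F (loopBracket L N G H) - loopBracket L N (loopNov N F H) G -
      loopNov N (loopBracket L N F H) G = 0 := by
  refine eq_zero_of_map_add₃_of_single
    (T := fun F G H => loopBracket L N (loopNov N F G) H + loopNov N (loopBracket L N F G) H -
      loopNov N F (loopBracket L N G H) - loopBracket L N (loopNov N F H) G -
      loopNov N (loopBracket L N F H) G)
    (loopBracket_loopNov_compat_single skew right_comm left_symm compat) ?_ ?_ ?_ F G H
  all_goals intros; simp only [map_add, LinearMap.add_apply]; abel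

theorem isGD_loop (h : IsGD V (L · ·) (N · ·)) :
    IsGD (ℤ →₀ V) (loopBracket L N · ·) (loopNov N · ·) := by
  obtain ⟨⟨-, skew, jacobi⟩, ⟨-, right_comm, left_symm⟩, compat⟩ := h
  exact isGD_of_linearMap _ _ (loopBracket_skew skew)
    (loopBracket_jacobi skew jacobi right_comm left_symm compat)
    (loopNov_right_comm right_comm) (loopNov_left_symm left_symm)
    (loopBracket_loopNov_compat skew right_comm left_symm compat)

end Loop

-- `V ⊗ ℂ[t, t⁻¹]` is modelled as `ℤ →₀ V`, with `a ⊗ tᵐ = single m a`.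
/-- Let `(V, [·,·], ∘)` be a Gel'fand-Dorfman bialgebra. Then
`A = V ⊗ ℂ[t, t⁻¹]` (encoded as finitely supported functions `ℤ →₀ V`, with
`a ⊗ tᵐ = single m a`) is a Gel'fand-Dorfman bialgebra with Novikov operation
`(a ⊗ tᵐ) ∗ (b ⊗ tⁿ) = (a ∘ b) ⊗ t^{m+n}` and Lie bracket
`[a ⊗ tᵐ, b ⊗ tⁿ] = (m (a ∘ b) − n (b ∘ a)) ⊗ t^{m+n−1} + [b, a] ⊗ t^{m+n}`. -/
theorem statement_10 (V : Type) [AddCommGroup V] [Module ℂ V]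
    (lie nov : V → V → V) (hGD : IsGD V lie nov) :
    IsGD (ℤ →₀ V)
      (fun F G => F.sum fun mm a => G.sum fun nn b =>
        mm • Finsupp.single (mm + nn - 1) (nov a b) -
        nn • Finsupp.single (mm + nn - 1) (nov b a) +
        Finsupp.single (mm + nn) (lie b a))
      (fun F G => F.sum fun mm a => G.sum fun nn b =>
        Finsupp.single (mm + nn) (nov a b)) := by
  obtain ⟨L, rfl⟩ := hGD.1.1.exists_linearMap₂
  obtain ⟨N, rfl⟩ := hGD.2.1.1.exists_linearMap₂
  convert isGD_loop hGD using 1 <;> funext F G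
  · exact (loopBracket_apply L N F G).symm
  · exact (loopNov_apply N F G).symm

end CA
end

section
/- Let (A, ·, [·,·]) be a Lie-Poisson algebra and let d : A → A be a derivation of the commutative associative algebra (A, ·) such that d[u,v] = [d(u), v] + [u, d(v)] + ξ[u,v] for all u, v ∈ A, where ξ ∈ ℂ is a constant. Define u ∘ v = u · d(v) + ξ u · v. Then (A, ·, ∘) is a Novikov-Poisson algebra and (A, [·,·], ∘) is a Gel'fand-Dorfman bialgebra; that is, (A, [·,·], ∘, ·) is a Gel'fand-Dorfman Novikov-Poisson algebra. -/
open Finsupp MvPolynomial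
open scoped TensorProduct

namespace CA

/-! Every identity for `u ∘ v = u · d v + ξ (u · v)` is a direct expansion: after applying the
Leibniz rules, both sides agree up to commutativity and associativity of `·`. In the
Gel'fand-Dorfman compatibility the extra term `ξ [u,v]` of `d [u,v]` cancels against the
`ξ (u · v)` part of `∘`. -/
section DerivationProduct

variable {V : Type*} [AddCommGroup V] [Module ℂ V] {lie dot : V → V → V}

theorem BilinV.neg_left {m : V → V → V} (hm : BilinV V m) (a b : V) : m (-a) b = -m a b := by
  rw [← neg_one_smul ℂ a, hm.2.2.1, neg_one_smul]

theorem BilinV.neg_right {m : V → V → V} (hm : BilinV V m) (a b : V) : m a (-b) = -m a b := by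
  rw [← neg_one_smul ℂ b, hm.2.2.2, neg_one_smul]

theorem IsCommAssoc.left_comm (h : IsCommAssoc V dot) (a b c : V) :
    dot a (dot b c) = dot b (dot a c) := by
  rw [← h.2.2, h.2.1 a b, h.2.2]

theorem IsLiePoisson.lie_dot_left (h : IsLiePoisson V lie dot) (a b c : V) :
    lie (dot a b) c = dot (lie a c) b + dot a (lie b c) := by
  obtain ⟨⟨hbil, hskew, -⟩, hdot, hleib⟩ := h
  rw [hskew, hleib, hskew c a, hskew c b, hdot.1.neg_left, hdot.1.neg_right, neg_add, neg_neg,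
    neg_neg]

def derivProd (dot : V → V → V) (d : V →ₗ[ℂ] V) (ξ : ℂ) (u v : V) : V :=
  dot u (d v) + ξ • dot u v

variable {d : V →ₗ[ℂ] V} {ξ : ℂ}

theorem bilinV_derivProd (hdot : BilinV V dot) : BilinV V (derivProd dot d ξ) := by
  obtain ⟨add_l, add_r, smul_l, smul_r⟩ := hdot
  refine ⟨fun a b c => ?_, fun a b c => ?_, fun z a b => ?_, fun z a b => ?_⟩ <;>
    simp only [derivProd, add_l, add_r, smul_l, smul_r, map_add, map_smul] <;>
    module

theorem derivProd_right_comm (hdot : IsCommAssoc V dot) (a b c : V) :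
    derivProd dot d ξ (derivProd dot d ξ a b) c =
      derivProd dot d ξ (derivProd dot d ξ a c) b := by
  obtain ⟨⟨add_l, -, smul_l, -⟩, comm, assoc⟩ := hdot
  simp only [derivProd, add_l, smul_l, smul_add, assoc]
  rw [comm (d b) (d c), comm b (d c), comm (d b) c, comm b c]
  module

theorem derivProd_assoc_symm (hdot : IsCommAssoc V dot)
    (hd : ∀ u v : V, d (dot u v) = dot (d u) v + dot u (d v)) (a b c : V) :
    derivProd dot d ξ (derivProd dot d ξ a b) c - derivProd dot d ξ a (derivProd dot d ξ b c) =
      derivProd dot d ξ (derivProd dot d ξ b a) c -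
        derivProd dot d ξ b (derivProd dot d ξ a c) := by
  have left_comm := hdot.left_comm
  obtain ⟨⟨add_l, add_r, smul_l, smul_r⟩, -, assoc⟩ := hdot
  simp only [derivProd, map_add, map_smul, hd, add_l, add_r, smul_l, smul_r, smul_add, assoc]
  rw [left_comm a b (d (d c)), left_comm a b (d c), left_comm a b c, left_comm a (d b) c]
  module

theorem isNovAlg_derivProd (hdot : IsCommAssoc V dot)
    (hd : ∀ u v : V, d (dot u v) = dot (d u) v + dot u (d v)) :
    IsNovAlg V (derivProd dot d ξ) :=
  ⟨bilinV_derivProd hdot.1, derivProd_right_comm hdot, derivProd_assoc_symm hdot hd⟩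

theorem dot_derivProd_assoc_symm (hdot : IsCommAssoc V dot)
    (hd : ∀ u v : V, d (dot u v) = dot (d u) v + dot u (d v)) (a b c : V) :
    dot (derivProd dot d ξ a b) c - derivProd dot d ξ a (dot b c) =
      dot (derivProd dot d ξ b a) c - derivProd dot d ξ b (dot a c) := by
  have left_comm := hdot.left_comm
  obtain ⟨⟨add_l, add_r, smul_l, -⟩, -, assoc⟩ := hdot
  simp only [derivProd, hd, add_l, add_r, smul_l, assoc]
  rw [left_comm a b (d c), left_comm a b c, left_comm a (d b) c]
  module

theorem derivProd_dot_left (hdot : IsCommAssoc V dot) (a b c : V) :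
    derivProd dot d ξ (dot a b) c = dot a (derivProd dot d ξ b c) := by
  simp only [derivProd, hdot.1.2.1, hdot.1.2.2.2, hdot.2.2]

theorem isNovPoisson_derivProd (hdot : IsCommAssoc V dot)
    (hd : ∀ u v : V, d (dot u v) = dot (d u) v + dot u (d v)) :
    IsNovPoisson V (derivProd dot d ξ) dot :=
  ⟨isNovAlg_derivProd hdot hd, hdot, dot_derivProd_assoc_symm hdot hd, derivProd_dot_left hdot⟩

theorem lie_derivProd_compat (h : IsLiePoisson V lie dot)
    (hξ : ∀ u v : V, d (lie u v) = lie (d u) v + lie u (d v) + ξ • lie u v) (a b c : V) :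
    lie (derivProd dot d ξ a b) c + derivProd dot d ξ (lie a b) c -
        derivProd dot d ξ a (lie b c) - lie (derivProd dot d ξ a c) b -
        derivProd dot d ξ (lie a c) b = 0 := by
  have lie_dot_left := h.lie_dot_left
  obtain ⟨⟨⟨add_l, -, smul_l, -⟩, skew, -⟩, ⟨dot_bil, -, -⟩, -⟩ := h
  simp only [derivProd, hξ, add_l, smul_l, smul_add, lie_dot_left, skew (d c) b, skew c b,
    dot_bil.2.1, dot_bil.2.2.2, dot_bil.neg_right]
  module

theorem isGD_derivProd (h : IsLiePoisson V lie dot)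
    (hd : ∀ u v : V, d (dot u v) = dot (d u) v + dot u (d v))
    (hξ : ∀ u v : V, d (lie u v) = lie (d u) v + lie u (d v) + ξ • lie u v) :
    IsGD V lie (derivProd dot d ξ) :=
  ⟨h.1, isNovAlg_derivProd h.2.1 hd, lie_derivProd_compat h hξ⟩

end DerivationProduct

/-- Let `(A, ·, [·,·])` be a Lie-Poisson algebra and `d` a derivation of
`(A, ·)` with `d[u,v] = [d u, v] + [u, d v] + ξ [u,v]` for a constant `ξ ∈ ℂ`.
With `u ∘ v = u · d v + ξ (u · v)`, the quadruple `(A, [·,·], ∘, ·)` is a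
Gel'fand-Dorfman Novikov-Poisson algebra: `(A, ∘, ·)` is a Novikov-Poisson algebra and
`(A, [·,·], ∘)` is a Gel'fand-Dorfman bialgebra (and `(A, [·,·], ·)` is Lie-Poisson by
hypothesis). -/
theorem statement_11 (A : Type) [AddCommGroup A] [Module ℂ A]
    (lie dot : A → A → A) (h : IsLiePoisson A lie dot)
    (d : A →ₗ[ℂ] A) (hd : ∀ u v : A, d (dot u v) = dot (d u) v + dot u (d v))
    (ξ : ℂ) (hξ : ∀ u v : A, d (lie u v) = lie (d u) v + lie u (d v) + ξ • lie u v) :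
    IsNovPoisson A (fun u v => dot u (d v) + ξ • dot u v) dot ∧
    IsGD A lie (fun u v => dot u (d v) + ξ • dot u v) :=
  ⟨isNovPoisson_derivProd h.2.1 hd, isGD_derivProd h hd hξ⟩
end CA
end
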